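/- arXiv:2411.14840 — 2 statements merged into one kernel-verified Lean document; each statement's English description precedes it below -/
import Mathlib

section
/- (Antisymmetry of the directional derivative along a tangential divergence-free field.) Let b>0 and let φ : ℝ³→ℝ be C¹, ℤ²-periodic in x̄, with ∂₃φ>0 on ℝ²×[-b,0] and φ(x̄,x₃)=x₃ for x₃ near −b. Let F be a C¹ ℤ²-periodic ℝ³-valued vector field and g, h C¹ ℤ²-periodic scalar functions on Ω̄. Assume ∇^φ·F = 0 in Ω, F·N = 0 on Σ where N=(−∂₁φ,−∂₂φ,1)|_{x₃=0}, and F₃ = 0 on Σ_b. Then ∫_Ω ((F·∇^φ)g) h ∂₃φ dx = −∫_Ω g ((F·∇^φ)h) ∂₃φ dx, where (F·∇^φ)f = Σᵢ Fᵢ ∂ᵢ^φ f. -/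
noncomputable section

/-- Scalar functions of `(x₁, x₂, x₃)`. -/
abbrev Fn3 : Type := ℝ → ℝ → ℝ → ℝ

/-- Partial derivative `∂₁`. -/
def p1 (f : Fn3) : Fn3 := fun x1 x2 x3 => deriv (fun y => f y x2 x3) x1

/-- Partial derivative `∂₂`. -/
def p2 (f : Fn3) : Fn3 := fun x1 x2 x3 => deriv (fun y => f x1 y x3) x2

/-- Partial derivative `∂₃`. -/
def p3 (f : Fn3) : Fn3 := fun x1 x2 x3 => deriv (fun y => f x1 x2 y) x3

/-- The flattened derivatives `∂₁^φ, ∂₂^φ, ∂₃^φ` associated with `φ`. -/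
def fd (φ : Fn3) : Fin 3 → Fn3 → Fn3 :=
  ![fun f x1 x2 x3 => p1 f x1 x2 x3 - p1 φ x1 x2 x3 / p3 φ x1 x2 x3 * p3 f x1 x2 x3,
    fun f x1 x2 x3 => p2 f x1 x2 x3 - p2 φ x1 x2 x3 / p3 φ x1 x2 x3 * p3 f x1 x2 x3,
    fun f x1 x2 x3 => p3 f x1 x2 x3 / p3 φ x1 x2 x3]

/-- Directional derivative `(F·∇^φ)f = Σᵢ Fᵢ ∂ᵢ^φ f`. -/
def dirD (φ : Fn3) (F : Fin 3 → Fn3) (f : Fn3) : Fn3 := fun x1 x2 x3 =>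
  ∑ i : Fin 3, F i x1 x2 x3 * fd φ i f x1 x2 x3

/-- Integral over one periodic cell of `Ω = 𝕋² × (-b, 0)`. -/
def intOmega (b : ℝ) (g : Fn3) : ℝ :=
  ∫ x1 in (0:ℝ)..1, ∫ x2 in (0:ℝ)..1, ∫ x3 in (-b)..(0:ℝ), g x1 x2 x3

/-- `ℤ²`-periodicity in the horizontal variables. -/
def Periodic3 (f : Fn3) : Prop :=
  (∀ x1 x2 x3 : ℝ, f (x1 + 1) x2 x3 = f x1 x2 x3) ∧
  (∀ x1 x2 x3 : ℝ, f x1 (x2 + 1) x3 = f x1 x2 x3)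

open MeasureTheory intervalIntegral Set Topology Filter

def q1 (u : ℝ → ℝ → ℝ) : ℝ → ℝ → ℝ := fun x y => deriv (fun t => u t y) x
def q2 (u : ℝ → ℝ → ℝ) : ℝ → ℝ → ℝ := fun x y => deriv (fun t => u x t) y

section basic
variable {u : ℝ → ℝ → ℝ} (hu : ContDiff ℝ 1 (fun p : ℝ × ℝ => u p.1 p.2))
include hu

lemma hasDerivAt_q1 (x y : ℝ) : HasDerivAt (fun t => u t y) (q1 u x y) x := by
  have h : HasDerivAt (fun t : ℝ => (t, y)) (1, 0) x :=
    (hasDerivAt_id x).prodMk (hasDerivAt_const x y)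
  have h2 : HasDerivAt (fun t => u t y)
      ((fderiv ℝ (fun p : ℝ × ℝ => u p.1 p.2) (x, y)) (1, 0)) x := by
    simpa [Function.comp_def] using (hu.differentiable one_ne_zero (x, y)).hasFDerivAt.comp_hasDerivAt x h
  simp only [q1]; rw [h2.deriv]; exact h2

lemma hasDerivAt_q2 (x y : ℝ) : HasDerivAt (fun t => u x t) (q2 u x y) y := by
  have h : HasDerivAt (fun t : ℝ => (x, t)) (0, 1) y :=
    (hasDerivAt_const y x).prodMk (hasDerivAt_id y)
  have h2 : HasDerivAt (fun t => u x t)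
      ((fderiv ℝ (fun p : ℝ × ℝ => u p.1 p.2) (x, y)) (0, 1)) y := by
    simpa [Function.comp_def] using (hu.differentiable one_ne_zero (x, y)).hasFDerivAt.comp_hasDerivAt y h
  simp only [q2]; rw [h2.deriv]; exact h2

lemma cont_q1 : Continuous (fun p : ℝ × ℝ => q1 u p.1 p.2) := by
  have h1 : Continuous fun p : ℝ × ℝ => fderiv ℝ (fun p : ℝ × ℝ => u p.1 p.2) p :=
    hu.continuous_fderiv one_ne_zero
  have : ∀ p : ℝ × ℝ, q1 u p.1 p.2 = fderiv ℝ (fun p : ℝ × ℝ => u p.1 p.2) p (1, 0) := by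
    intro p
    have h : HasDerivAt (fun t : ℝ => (t, p.2)) (1, 0) p.1 :=
      (hasDerivAt_id p.1).prodMk (hasDerivAt_const p.1 p.2)
    have h2 : HasDerivAt (fun t => u t p.2)
        ((fderiv ℝ (fun p : ℝ × ℝ => u p.1 p.2) p) (1, 0)) p.1 := by
      simpa [Function.comp_def] using (hu.differentiable one_ne_zero p).hasFDerivAt.comp_hasDerivAt p.1 h
    simpa [q1] using h2.deriv
  simp only [this]
  exact h1.clm_apply continuous_const

lemma cont_q2 : Continuous (fun p : ℝ × ℝ => q2 u p.1 p.2) := by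
  have h1 : Continuous fun p : ℝ × ℝ => fderiv ℝ (fun p : ℝ × ℝ => u p.1 p.2) p :=
    hu.continuous_fderiv one_ne_zero
  have : ∀ p : ℝ × ℝ, q2 u p.1 p.2 = fderiv ℝ (fun p : ℝ × ℝ => u p.1 p.2) p (0, 1) := by
    intro p
    have h : HasDerivAt (fun t : ℝ => (p.1, t)) (0, 1) p.2 :=
      (hasDerivAt_const p.2 p.1).prodMk (hasDerivAt_id p.2)
    have h2 : HasDerivAt (fun t => u p.1 t)
        ((fderiv ℝ (fun p : ℝ × ℝ => u p.1 p.2) p) (0, 1)) p.2 := by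
      simpa [Function.comp_def] using (hu.differentiable one_ne_zero p).hasFDerivAt.comp_hasDerivAt p.2 h
    simpa [q2] using h2.deriv
  simp only [this]
  exact h1.clm_apply continuous_const

end basic

lemma ftc_primitive {w : ℝ → ℝ} (hw : Continuous w) (s : ℝ) :
    HasDerivAt (fun t => ∫ r in (0:ℝ)..t, w r) (w s) s :=
  intervalIntegral.integral_hasDerivAt_right (hw.intervalIntegrable 0 s)
    (hw.stronglyMeasurableAtFilter _ _) hw.continuousAt

lemma interval_diff {w : ℝ → ℝ} (hw : Continuous w) (y ε : ℝ) :
    ∫ s in y..(y + ε), w s = (∫ r in (0:ℝ)..(y + ε), w r) - ∫ r in (0:ℝ)..y, w r :=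
  (intervalIntegral.integral_interval_sub_left (hw.intervalIntegrable _ _)
    (hw.intervalIntegrable _ _)).symm

lemma avg_tendsto {w : ℝ → ℝ} (hw : Continuous w) (y : ℝ) :
    Filter.Tendsto (fun n : ℕ => (∫ s in y..(y + ((n:ℝ)+1)⁻¹), w s) / ((n:ℝ)+1)⁻¹)
      Filter.atTop (𝓝 (w y)) := by
  have hH := ftc_primitive hw y
  have h1 : Filter.Tendsto (fun n : ℕ => y + ((n:ℝ)+1)⁻¹) Filter.atTop (𝓝[≠] y) := by
    rw [tendsto_nhdsWithin_iff]
    constructor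
    · have : Filter.Tendsto (fun n : ℕ => ((n:ℝ)+1)⁻¹) Filter.atTop (𝓝 0) :=
        tendsto_one_div_add_atTop_nhds_zero_nat.congr (by intro n; rw [one_div])
      simpa using (tendsto_const_nhds (x := y)).add this
    · filter_upwards with n
      have : (0:ℝ) < ((n:ℝ)+1)⁻¹ := by positivity
      simp only [Set.mem_compl_iff, Set.mem_singleton_iff]
      intro hcon
      nlinarith [hcon]
  have h2 := (hasDerivAt_iff_tendsto_slope.mp hH).comp h1
  refine h2.congr ?_
  intro n
  have hne : ((n:ℝ)+1)⁻¹ ≠ 0 := by positivity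
  rw [interval_diff hw]
  simp only [Function.comp, slope_def_field, add_sub_cancel_left]

lemma swap_integral2 {f : ℝ → ℝ → ℝ} (hf : Continuous fun p : ℝ × ℝ => f p.1 p.2)
    {a b c d : ℝ} (hab : a ≤ b) (hcd : c ≤ d) :
    ∫ x in a..b, ∫ y in c..d, f x y = ∫ y in c..d, ∫ x in a..b, f x y := by
  rw [intervalIntegral.integral_of_le hab, intervalIntegral.integral_of_le hcd]
  simp_rw [intervalIntegral.integral_of_le hcd, intervalIntegral.integral_of_le hab]
  apply MeasureTheory.integral_integral_swap
  have h1 : MeasureTheory.IntegrableOn (fun p : ℝ × ℝ => f p.1 p.2)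
      (Set.Icc a b ×ˢ Set.Icc c d) (volume.prod volume) := by
    rw [← MeasureTheory.Measure.volume_eq_prod]
    exact hf.continuousOn.integrableOn_compact (isCompact_Icc.prod isCompact_Icc)
  have h2 := h1.mono_set (Set.prod_mono Set.Ioc_subset_Icc_self Set.Ioc_subset_Icc_self)
  rwa [MeasureTheory.IntegrableOn, ← MeasureTheory.Measure.prod_restrict] at h2

lemma exists_bound {f : ℝ → ℝ → ℝ} (hf : Continuous fun p : ℝ × ℝ => f p.1 p.2)
    {s : Set (ℝ × ℝ)} (hs : IsCompact s) : ∃ C, 0 ≤ C ∧ ∀ p ∈ s, |f p.1 p.2| ≤ C := by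
  obtain ⟨C, hC⟩ := hs.exists_bound_of_continuousOn hf.continuousOn
  exact ⟨max C 0, le_max_right _ _, fun p hp => le_trans (by simpa using hC p hp) (le_max_left _ _)⟩

/-- Steklov average in the second variable. -/
def avg (w : ℝ → ℝ → ℝ) (ε : ℝ) : ℝ → ℝ → ℝ := fun x y => (∫ s in y..(y + ε), w x s) / ε

lemma avg_cont {w : ℝ → ℝ → ℝ} (hw : Continuous fun p : ℝ × ℝ => w p.1 p.2) (ε : ℝ) :
    Continuous fun p : ℝ × ℝ => avg w ε p.1 p.2 := by
  have hsl : ∀ x : ℝ, Continuous (w x) := fun x => hw.comp (Continuous.prodMk_right x)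
  have : ∀ p : ℝ × ℝ, avg w ε p.1 p.2 =
      ((∫ s in (0:ℝ)..(p.2 + ε), w p.1 s) - ∫ s in (0:ℝ)..p.2, w p.1 s) / ε := by
    intro p; rw [avg, interval_diff (hsl p.1)]
  simp only [this]
  have huc : Continuous (Function.uncurry fun (p : ℝ × ℝ) (t : ℝ) => w p.1 t) := by
    apply hw.comp (f := fun q : (ℝ × ℝ) × ℝ => (q.1.1, q.2))
    exact (continuous_fst.fst).prodMk continuous_snd
  have h1 : Continuous fun p : ℝ × ℝ => ∫ s in (0:ℝ)..(p.2 + ε), w p.1 s :=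
    intervalIntegral.continuous_parametric_intervalIntegral_of_continuous huc
      (continuous_snd.add continuous_const)
  have h2 : Continuous fun p : ℝ × ℝ => ∫ s in (0:ℝ)..p.2, w p.1 s :=
    intervalIntegral.continuous_parametric_intervalIntegral_of_continuous huc continuous_snd
  exact (h1.sub h2).div_const ε

lemma avg_ftc_eq {v : ℝ → ℝ → ℝ}
    (hv : ContDiff ℝ 1 (fun p : ℝ × ℝ => v p.1 p.2)) (ε : ℝ) (x y : ℝ) :
    avg (q2 v) ε x y = (v x (y + ε) - v x y) / ε := by
  rw [avg]
  congr 1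
  exact intervalIntegral.integral_eq_sub_of_hasDerivAt
    (fun s _ => hasDerivAt_q2 hv x s)
    (((cont_q2 hv).comp (Continuous.prodMk_right x)).intervalIntegrable _ _)

lemma avg_hasDerivAt {w : ℝ → ℝ → ℝ} (hw : Continuous fun p : ℝ × ℝ => w p.1 p.2)
    (ε : ℝ) (x y : ℝ) :
    HasDerivAt (fun t => avg w ε x t) ((w x (y + ε) - w x y) / ε) y := by
  have hsl : Continuous (w x) := hw.comp (Continuous.prodMk_right x)
  have heq : (fun t => avg w ε x t) = fun t =>
      ((∫ s in (0:ℝ)..(t + ε), w x s) - ∫ s in (0:ℝ)..t, w x s) / ε := by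
    funext t; rw [avg, interval_diff hsl]
  rw [heq]
  have h1 : HasDerivAt (fun t : ℝ => ∫ s in (0:ℝ)..(t + ε), w x s) (w x (y + ε)) y := by
    have := (ftc_primitive hsl (y + ε)).comp y ((hasDerivAt_id y).add_const ε)
    simpa [Function.comp_def] using this
  exact ((h1.sub (ftc_primitive hsl y)).div_const ε)

lemma avg_bound {w : ℝ → ℝ → ℝ} {x y ε C c d : ℝ} (hε : 0 < ε)
    (hsl : Continuous (w x)) (hyc : c ≤ y) (hyd : y + ε ≤ d)
    (hwb : ∀ s ∈ Set.Icc c d, |w x s| ≤ C) : |avg w ε x y| ≤ C := by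
  have h1 : ‖∫ s in y..(y + ε), w x s‖ ≤ C * |y + ε - y| := by
    apply intervalIntegral.norm_integral_le_of_norm_le_const
    intro s hs
    rw [Set.uIoc_of_le (by linarith)] at hs
    exact hwb s ⟨le_of_lt (lt_of_le_of_lt hyc hs.1), le_trans hs.2 hyd⟩
  have hC : 0 ≤ C := le_trans (abs_nonneg _) (hwb c ⟨le_refl c, by linarith⟩)
  rw [avg, abs_div, abs_of_pos hε]
  rw [Real.norm_eq_abs] at h1
  have : |y + ε - y| = ε := by rw [show y + ε - y = ε by ring, abs_of_pos hε]
  rw [this] at h1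
  calc |∫ s in y..(y + ε), w x s| / ε ≤ C * ε / ε := by gcongr
      _ = C := by field_simp

lemma avg_tendsto2 {w : ℝ → ℝ → ℝ} (hw : Continuous fun p : ℝ × ℝ => w p.1 p.2) (x y : ℝ) :
    Filter.Tendsto (fun n : ℕ => avg w ((n:ℝ)+1)⁻¹ x y) Filter.atTop (𝓝 (w x y)) := by
  simpa [avg] using avg_tendsto (hw.comp (Continuous.prodMk_right x)) y

/-- The key 2D integration-by-parts (Green/Jacobian) identity for `C¹` functions,
periodic in the first variable. -/
lemma jacobi_green {u v : ℝ → ℝ → ℝ} {b : ℝ} (hb : 0 < b)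
    (hu : ContDiff ℝ 1 (fun p : ℝ × ℝ => u p.1 p.2))
    (hv : ContDiff ℝ 1 (fun p : ℝ × ℝ => v p.1 p.2))
    (hpu : ∀ x y, u (x + 1) y = u x y) (hpv : ∀ x y, v (x + 1) y = v x y) :
    ∫ x in (0:ℝ)..1, ∫ y in (-b)..(0:ℝ),
        (q1 u x y * q2 v x y - q2 u x y * q1 v x y)
      = (∫ x in (0:ℝ)..1, u x (-b) * q1 v x (-b)) - ∫ x in (0:ℝ)..1, u x 0 * q1 v x 0 := by
  -- continuity facts
  have hcu : Continuous fun p : ℝ × ℝ => u p.1 p.2 := hu.continuous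
  have hcv : Continuous fun p : ℝ × ℝ => v p.1 p.2 := hv.continuous
  have hq1u := cont_q1 hu; have hq2u := cont_q2 hu
  have hq1v := cont_q1 hv; have hq2v := cont_q2 hv
  set δ : ℕ → ℝ := fun n => ((n:ℝ)+1)⁻¹ with hδ
  have hδpos : ∀ n, 0 < δ n := fun n => by positivity
  have hδle : ∀ n, δ n ≤ 1 := by
    intro n
    rw [hδ]
    rw [inv_le_one_iff₀]
    right; push_cast; linarith [Nat.cast_nonneg (α := ℝ) n]
  -- the approximate integrand
  set Jn : ℕ → ℝ → ℝ → ℝ := fun n x y =>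
    q1 u x y * avg (q2 v) (δ n) x y - q2 u x y * avg (q1 v) (δ n) x y with hJn
  set J : ℝ → ℝ → ℝ := fun x y => q1 u x y * q2 v x y - q2 u x y * q1 v x y with hJdef
  set B : ℕ → ℝ → ℝ → ℝ := fun n x y => u x y * avg (q1 v) (δ n) x y with hB
  have hJncont : ∀ n, Continuous fun p : ℝ × ℝ => Jn n p.1 p.2 := by
    intro n
    exact ((hq1u.mul (avg_cont hq2v (δ n))).sub (hq2u.mul (avg_cont hq1v (δ n))))
  have hBcont : ∀ n, Continuous fun p : ℝ × ℝ => B n p.1 p.2 := by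
    intro n
    exact hcu.mul (avg_cont hq1v (δ n))
  -- KEY identity for each n
  have KEY : ∀ n, (∫ x in (0:ℝ)..1, ∫ y in (-b)..(0:ℝ), Jn n x y)
      = (∫ x in (0:ℝ)..1, B n x (-b)) - ∫ x in (0:ℝ)..1, B n x 0 := by
    intro n
    set ε := δ n with hε
    have hεpos : 0 < ε := hδpos n
    -- the two "conservative" integrands
    set a1 : ℝ → ℝ → ℝ := fun x y =>
      q1 u x y * avg (q2 v) ε x y + u x y * ((q1 v x (y + ε) - q1 v x y) / ε) with ha1
    set b2 : ℝ → ℝ → ℝ := fun x y =>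
      q2 u x y * avg (q1 v) ε x y + u x y * ((q1 v x (y + ε) - q1 v x y) / ε) with hb2
    have ha1cont : Continuous fun p : ℝ × ℝ => a1 p.1 p.2 := by
      apply (hq1u.mul (avg_cont hq2v ε)).add
      apply hcu.mul
      apply Continuous.div_const
      apply Continuous.sub _ hq1v
      exact hq1v.comp ((continuous_fst).prodMk (continuous_snd.add continuous_const))
    have hb2cont : Continuous fun p : ℝ × ℝ => b2 p.1 p.2 := by
      apply (hq2u.mul (avg_cont hq1v ε)).add
      apply hcu.mul
      apply Continuous.div_const
      apply Continuous.sub _ hq1v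
      exact hq1v.comp ((continuous_fst).prodMk (continuous_snd.add continuous_const))
    have hsplit : (∫ x in (0:ℝ)..1, ∫ y in (-b)..(0:ℝ), Jn n x y)
        = (∫ x in (0:ℝ)..1, ∫ y in (-b)..(0:ℝ), a1 x y)
          - ∫ x in (0:ℝ)..1, ∫ y in (-b)..(0:ℝ), b2 x y := by
      have h1 : ∀ x y : ℝ, Jn n x y = a1 x y - b2 x y := by
        intro x y; simp only [hJn, ha1, hb2]; ring
      have h2 : ∀ x : ℝ, (∫ y in (-b)..(0:ℝ), Jn n x y)
          = (∫ y in (-b)..(0:ℝ), a1 x y) - ∫ y in (-b)..(0:ℝ), b2 x y := by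
        intro x
        simp only [h1]
        exact intervalIntegral.integral_sub
          ((ha1cont.comp (Continuous.prodMk_right x)).intervalIntegrable _ _)
          ((hb2cont.comp (Continuous.prodMk_right x)).intervalIntegrable _ _)
      simp only [h2]
      apply intervalIntegral.integral_sub
      · exact (intervalIntegral.continuous_parametric_intervalIntegral_of_continuous'
          (by apply ha1cont.comp (f := fun q : ℝ × ℝ => (q.1, q.2));
              exact continuous_fst.prodMk continuous_snd) _ _).intervalIntegrable _ _
      · exact (intervalIntegral.continuous_parametric_intervalIntegral_of_continuous'
          (by apply hb2cont.comp (f := fun q : ℝ × ℝ => (q.1, q.2));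
              exact continuous_fst.prodMk continuous_snd) _ _).intervalIntegrable _ _
    have hA0 : (∫ x in (0:ℝ)..1, ∫ y in (-b)..(0:ℝ), a1 x y) = 0 := by
      rw [swap_integral2 ha1cont (by norm_num) (by linarith)]
      have hinner : ∀ y ∈ Set.uIcc (-b) (0:ℝ), (∫ x in (0:ℝ)..1, a1 x y) = 0 := by
        intro y _
        have hftc : ∀ x ∈ Set.uIcc (0:ℝ) 1,
            HasDerivAt (fun t => u t y * ((v t (y + ε) - v t y) / ε)) (a1 x y) x := by
          intro x _
          have h1 : HasDerivAt (fun t => u t y) (q1 u x y) x := hasDerivAt_q1 hu x y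
          have h2 : HasDerivAt (fun t => (v t (y + ε) - v t y) / ε)
              ((q1 v x (y + ε) - q1 v x y) / ε) x :=
            ((hasDerivAt_q1 hv x (y + ε)).sub (hasDerivAt_q1 hv x y)).div_const ε
          have := h1.mul h2
          simp only [ha1]
          rw [avg_ftc_eq hv]
          exact this
        have := intervalIntegral.integral_eq_sub_of_hasDerivAt hftc
          ((ha1cont.comp ((continuous_id).prodMk continuous_const)).intervalIntegrable _ _)
        rw [this]
        have e1 : u 1 y = u 0 y := by simpa using hpu 0 y
        have e2 : v 1 (y + ε) = v 0 (y + ε) := by simpa using hpv 0 (y + ε)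
        have e3 : v 1 y = v 0 y := by simpa using hpv 0 y
        rw [e1, e2, e3]; ring
      rw [intervalIntegral.integral_congr hinner]
      simp
    have hBsub : (∫ x in (0:ℝ)..1, ∫ y in (-b)..(0:ℝ), b2 x y)
        = (∫ x in (0:ℝ)..1, B n x 0) - ∫ x in (0:ℝ)..1, B n x (-b) := by
      have hinner : ∀ x : ℝ, (∫ y in (-b)..(0:ℝ), b2 x y) = B n x 0 - B n x (-b) := by
        intro x
        apply intervalIntegral.integral_eq_sub_of_hasDerivAt
        · intro y _
          have h1 : HasDerivAt (fun t => u x t) (q2 u x y) y := hasDerivAt_q2 hu x y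
          have h2 : HasDerivAt (fun t => avg (q1 v) ε x t)
              ((q1 v x (y + ε) - q1 v x y) / ε) y := avg_hasDerivAt hq1v ε x y
          exact h1.mul h2
        · exact (hb2cont.comp (Continuous.prodMk_right x)).intervalIntegrable _ _
      simp only [hinner]
      apply intervalIntegral.integral_sub
      · exact ((hBcont n).comp ((continuous_id).prodMk continuous_const)).intervalIntegrable _ _
      · exact ((hBcont n).comp ((continuous_id).prodMk continuous_const)).intervalIntegrable _ _
    rw [hsplit, hA0, hBsub]; ring
  -- bounds on a compact set
  have hbK : -b ≤ (1:ℝ) := by linarith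
  set K : Set (ℝ × ℝ) := Set.Icc (0:ℝ) 1 ×ˢ Set.Icc (-b) 1 with hK
  have hKc : IsCompact K := isCompact_Icc.prod isCompact_Icc
  obtain ⟨C1, hC1n, hC1⟩ := exists_bound hq1u hKc
  obtain ⟨C2, hC2n, hC2⟩ := exists_bound hq2u hKc
  obtain ⟨C3, hC3n, hC3⟩ := exists_bound hq1v hKc
  obtain ⟨C4, hC4n, hC4⟩ := exists_bound hq2v hKc
  obtain ⟨C0, hC0n, hC0⟩ := exists_bound hcu hKc
  have havgb : ∀ (w : ℝ → ℝ → ℝ), (Continuous fun p : ℝ × ℝ => w p.1 p.2) → ∀ (C : ℝ),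
      (∀ p ∈ K, |w p.1 p.2| ≤ C) → ∀ (n : ℕ) (x y : ℝ), x ∈ Set.Icc (0:ℝ) 1 →
      y ∈ Set.Icc (-b) (0:ℝ) → |avg w (δ n) x y| ≤ C := by
    intro w hw C hCb n x y hx hy
    apply avg_bound (c := -b) (d := 1) (hδpos n) (hw.comp (Continuous.prodMk_right x)) hy.1
      (by have := hδle n; have := hy.2; linarith)
    intro s hs
    exact hCb (x, s) ⟨hx, hs⟩
  have hJb : ∀ (n : ℕ) (x y : ℝ), x ∈ Set.Icc (0:ℝ) 1 → y ∈ Set.Icc (-b) (0:ℝ) →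
      |Jn n x y| ≤ C1 * C4 + C2 * C3 := by
    intro n x y hx hy
    have hyK : y ∈ Set.Icc (-b) (1:ℝ) := ⟨hy.1, le_trans hy.2 (by norm_num)⟩
    have h1 : |q1 u x y| ≤ C1 := hC1 (x, y) ⟨hx, hyK⟩
    have h2 : |q2 u x y| ≤ C2 := hC2 (x, y) ⟨hx, hyK⟩
    have h3 : |avg (q2 v) (δ n) x y| ≤ C4 := havgb _ hq2v _ hC4 n x y hx hy
    have h4 : |avg (q1 v) (δ n) x y| ≤ C3 := havgb _ hq1v _ hC3 n x y hx hy
    calc |Jn n x y| ≤ |q1 u x y * avg (q2 v) (δ n) x y| + |q2 u x y * avg (q1 v) (δ n) x y| :=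
          abs_sub _ _
      _ = |q1 u x y| * |avg (q2 v) (δ n) x y| + |q2 u x y| * |avg (q1 v) (δ n) x y| := by
          rw [abs_mul, abs_mul]
      _ ≤ C1 * C4 + C2 * C3 := by
          apply add_le_add
          · exact mul_le_mul h1 h3 (abs_nonneg _) hC1n
          · exact mul_le_mul h2 h4 (abs_nonneg _) hC2n
  have hJlim : ∀ x y : ℝ, Filter.Tendsto (fun n => Jn n x y) Filter.atTop (𝓝 (J x y)) := by
    intro x y
    exact (Filter.Tendsto.mul tendsto_const_nhds (avg_tendsto2 hq2v x y)).sub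
      (Filter.Tendsto.mul tendsto_const_nhds (avg_tendsto2 hq1v x y))
  have hBlim : ∀ x y : ℝ, Filter.Tendsto (fun n => B n x y) Filter.atTop
      (𝓝 (u x y * q1 v x y)) := by
    intro x y
    exact Filter.Tendsto.mul tendsto_const_nhds (avg_tendsto2 hq1v x y)
  have hBb : ∀ (n : ℕ) (x y : ℝ), x ∈ Set.Icc (0:ℝ) 1 → y ∈ Set.Icc (-b) (0:ℝ) →
      |B n x y| ≤ C0 * C3 := by
    intro n x y hx hy
    have hyK : y ∈ Set.Icc (-b) (1:ℝ) := ⟨hy.1, le_trans hy.2 (by norm_num)⟩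
    rw [hB]
    simp only [abs_mul]
    exact mul_le_mul (hC0 (x, y) ⟨hx, hyK⟩) (havgb _ hq1v _ hC3 n x y hx hy) (abs_nonneg _) hC0n
  -- convergence of the boundary terms
  have hbd : ∀ c ∈ Set.Icc (-b) (0:ℝ), Filter.Tendsto (fun n => ∫ x in (0:ℝ)..1, B n x c)
      Filter.atTop (𝓝 (∫ x in (0:ℝ)..1, u x c * q1 v x c)) := by
    intro c hc
    apply intervalIntegral.tendsto_integral_filter_of_dominated_convergence
      (bound := fun _ => C0 * C3)
    · filter_upwards with n
      exact (((hBcont n).comp ((continuous_id).prodMk continuous_const)).aestronglyMeasurable)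
    · filter_upwards with n
      apply Filter.Eventually.of_forall
      intro x hx
      rw [Set.uIoc_of_le (by norm_num : (0:ℝ) ≤ 1)] at hx
      have hx' : x ∈ Set.Icc (0:ℝ) 1 := ⟨le_of_lt hx.1, hx.2⟩
      simpa [Real.norm_eq_abs] using hBb n x c hx' hc
    · exact intervalIntegrable_const
    · filter_upwards with x
      exact fun _ => hBlim x c
  -- convergence of the main double integral
  have hmain : Filter.Tendsto (fun n => ∫ x in (0:ℝ)..1, ∫ y in (-b)..(0:ℝ), Jn n x y)
      Filter.atTop (𝓝 (∫ x in (0:ℝ)..1, ∫ y in (-b)..(0:ℝ), J x y)) := by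
    apply intervalIntegral.tendsto_integral_filter_of_dominated_convergence
      (bound := fun _ => (C1 * C4 + C2 * C3) * b)
    · filter_upwards with n
      exact (intervalIntegral.continuous_parametric_intervalIntegral_of_continuous'
        (by apply (hJncont n).comp (f := fun q : ℝ × ℝ => (q.1, q.2));
            exact continuous_fst.prodMk continuous_snd) _ _).aestronglyMeasurable
    · filter_upwards with n
      apply Filter.Eventually.of_forall
      intro x hx
      rw [Set.uIoc_of_le (by norm_num : (0:ℝ) ≤ 1)] at hx
      have hx' : x ∈ Set.Icc (0:ℝ) 1 := ⟨le_of_lt hx.1, hx.2⟩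
      rw [Real.norm_eq_abs]
      have := intervalIntegral.norm_integral_le_of_norm_le_const
        (C := C1 * C4 + C2 * C3) (f := fun y => Jn n x y) (a := -b) (b := (0:ℝ)) ?_
      · rw [Real.norm_eq_abs] at this
        calc |∫ y in (-b)..(0:ℝ), Jn n x y| ≤ (C1 * C4 + C2 * C3) * |0 - -b| := this
          _ = (C1 * C4 + C2 * C3) * b := by rw [show (0:ℝ) - -b = b by ring, abs_of_pos hb]
      · intro y hy
        rw [Set.uIoc_of_le (by linarith : -b ≤ (0:ℝ))] at hy
        have hy' : y ∈ Set.Icc (-b) (0:ℝ) := ⟨le_of_lt hy.1, hy.2⟩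
        simpa [Real.norm_eq_abs] using hJb n x y hx' hy'
    · exact intervalIntegrable_const
    · apply Filter.Eventually.of_forall
      intro x hx
      rw [Set.uIoc_of_le (by norm_num : (0:ℝ) ≤ 1)] at hx
      have hx' : x ∈ Set.Icc (0:ℝ) 1 := ⟨le_of_lt hx.1, hx.2⟩
      apply intervalIntegral.tendsto_integral_filter_of_dominated_convergence
        (bound := fun _ => C1 * C4 + C2 * C3)
      · filter_upwards with n
        exact ((hJncont n).comp (Continuous.prodMk_right x)).aestronglyMeasurable
      · filter_upwards with n
        apply Filter.Eventually.of_forall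
        intro y hy
        rw [Set.uIoc_of_le (by linarith : -b ≤ (0:ℝ))] at hy
        have hy' : y ∈ Set.Icc (-b) (0:ℝ) := ⟨le_of_lt hy.1, hy.2⟩
        simpa [Real.norm_eq_abs] using hJb n x y hx' hy'
      · exact intervalIntegrable_const
      · filter_upwards with y
        exact fun _ => hJlim x y
  -- conclusion by uniqueness of limits
  have hbot : (-b : ℝ) ∈ Set.Icc (-b) (0:ℝ) := ⟨le_refl _, by linarith⟩
  have htop : (0 : ℝ) ∈ Set.Icc (-b) (0:ℝ) := ⟨by linarith, le_refl _⟩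
  have hrhs : Filter.Tendsto (fun n => (∫ x in (0:ℝ)..1, B n x (-b)) - ∫ x in (0:ℝ)..1, B n x 0)
      Filter.atTop (𝓝 ((∫ x in (0:ℝ)..1, u x (-b) * q1 v x (-b))
        - ∫ x in (0:ℝ)..1, u x 0 * q1 v x 0)) := (hbd _ hbot).sub (hbd _ htop)
  have hfin := tendsto_nhds_unique (hmain.congr KEY) hrhs
  simpa only [hJdef] using hfin



section infra3
variable {f : Fn3} (hf : ContDiff ℝ 1 (fun p : ℝ × ℝ × ℝ => f p.1 p.2.1 p.2.2))
include hf

lemma contDiff_slice13 (x2 : ℝ) : ContDiff ℝ 1 (fun p : ℝ × ℝ => f p.1 x2 p.2) :=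
  hf.comp (contDiff_fst.prodMk (contDiff_const.prodMk contDiff_snd))

lemma contDiff_slice23 (x1 : ℝ) : ContDiff ℝ 1 (fun p : ℝ × ℝ => f x1 p.1 p.2) :=
  hf.comp (contDiff_const.prodMk contDiff_id)

lemma hasDerivAt_p1 (x1 x2 x3 : ℝ) :
    HasDerivAt (fun t => f t x2 x3) (p1 f x1 x2 x3) x1 :=
  hasDerivAt_q1 (contDiff_slice13 hf x2) x1 x3

lemma hasDerivAt_p2 (x1 x2 x3 : ℝ) :
    HasDerivAt (fun t => f x1 t x3) (p2 f x1 x2 x3) x2 :=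
  hasDerivAt_q1 (contDiff_slice23 hf x1) x2 x3

lemma hasDerivAt_p3 (x1 x2 x3 : ℝ) :
    HasDerivAt (fun t => f x1 x2 t) (p3 f x1 x2 x3) x3 :=
  hasDerivAt_q2 (contDiff_slice23 hf x1) x2 x3

lemma cont_p1 : Continuous fun p : ℝ × ℝ × ℝ => p1 f p.1 p.2.1 p.2.2 := by
  have h1 : Continuous fun p : ℝ × ℝ × ℝ =>
      fderiv ℝ (fun p : ℝ × ℝ × ℝ => f p.1 p.2.1 p.2.2) p := hf.continuous_fderiv one_ne_zero
  have key : ∀ p : ℝ × ℝ × ℝ, p1 f p.1 p.2.1 p.2.2 =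
      fderiv ℝ (fun p : ℝ × ℝ × ℝ => f p.1 p.2.1 p.2.2) p (1, 0, 0) := by
    intro p
    have h : HasDerivAt (fun t : ℝ => (t, p.2.1, p.2.2)) ((1 : ℝ), (0 : ℝ), (0 : ℝ)) p.1 :=
      (hasDerivAt_id p.1).prodMk ((hasDerivAt_const p.1 p.2.1).prodMk (hasDerivAt_const p.1 p.2.2))
    have h2 := (hf.differentiable one_ne_zero p).hasFDerivAt.comp_hasDerivAt p.1 h
    simpa [p1, Function.comp_def] using h2.deriv
  simp only [key]
  exact h1.clm_apply continuous_const

lemma cont_p2 : Continuous fun p : ℝ × ℝ × ℝ => p2 f p.1 p.2.1 p.2.2 := by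
  have h1 : Continuous fun p : ℝ × ℝ × ℝ =>
      fderiv ℝ (fun p : ℝ × ℝ × ℝ => f p.1 p.2.1 p.2.2) p := hf.continuous_fderiv one_ne_zero
  have key : ∀ p : ℝ × ℝ × ℝ, p2 f p.1 p.2.1 p.2.2 =
      fderiv ℝ (fun p : ℝ × ℝ × ℝ => f p.1 p.2.1 p.2.2) p (0, 1, 0) := by
    intro p
    have h : HasDerivAt (fun t : ℝ => (p.1, t, p.2.2)) ((0 : ℝ), (1 : ℝ), (0 : ℝ)) p.2.1 :=
      (hasDerivAt_const p.2.1 p.1).prodMk ((hasDerivAt_id p.2.1).prodMk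
        (hasDerivAt_const p.2.1 p.2.2))
    have h2 := (hf.differentiable one_ne_zero p).hasFDerivAt.comp_hasDerivAt p.2.1 h
    simpa [p2, Function.comp_def] using h2.deriv
  simp only [key]
  exact h1.clm_apply continuous_const

lemma cont_p3 : Continuous fun p : ℝ × ℝ × ℝ => p3 f p.1 p.2.1 p.2.2 := by
  have h1 : Continuous fun p : ℝ × ℝ × ℝ =>
      fderiv ℝ (fun p : ℝ × ℝ × ℝ => f p.1 p.2.1 p.2.2) p := hf.continuous_fderiv one_ne_zero
  have key : ∀ p : ℝ × ℝ × ℝ, p3 f p.1 p.2.1 p.2.2 =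
      fderiv ℝ (fun p : ℝ × ℝ × ℝ => f p.1 p.2.1 p.2.2) p (0, 0, 1) := by
    intro p
    have h : HasDerivAt (fun t : ℝ => (p.1, p.2.1, t)) ((0 : ℝ), (0 : ℝ), (1 : ℝ)) p.2.2 :=
      (hasDerivAt_const p.2.2 p.1).prodMk ((hasDerivAt_const p.2.2 p.2.1).prodMk
        (hasDerivAt_id p.2.2))
    have h2 := (hf.differentiable one_ne_zero p).hasFDerivAt.comp_hasDerivAt p.2.2 h
    simpa [p3, Function.comp_def] using h2.deriv
  simp only [key]
  exact h1.clm_apply continuous_const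

end infra3

section prodrule
variable {f g : Fn3} (hf : ContDiff ℝ 1 (fun p : ℝ × ℝ × ℝ => f p.1 p.2.1 p.2.2))
  (hg : ContDiff ℝ 1 (fun p : ℝ × ℝ × ℝ => g p.1 p.2.1 p.2.2))
include hf hg

lemma contDiff_mul3 : ContDiff ℝ 1
    (fun p : ℝ × ℝ × ℝ => (fun a b c => f a b c * g a b c) p.1 p.2.1 p.2.2) := hf.mul hg

lemma p1_mul (x1 x2 x3 : ℝ) : p1 (fun a b c => f a b c * g a b c) x1 x2 x3 =
    p1 f x1 x2 x3 * g x1 x2 x3 + f x1 x2 x3 * p1 g x1 x2 x3 :=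
  ((hasDerivAt_p1 hf x1 x2 x3).mul (hasDerivAt_p1 hg x1 x2 x3)).deriv

lemma p2_mul (x1 x2 x3 : ℝ) : p2 (fun a b c => f a b c * g a b c) x1 x2 x3 =
    p2 f x1 x2 x3 * g x1 x2 x3 + f x1 x2 x3 * p2 g x1 x2 x3 :=
  ((hasDerivAt_p2 hf x1 x2 x3).mul (hasDerivAt_p2 hg x1 x2 x3)).deriv

lemma p3_mul (x1 x2 x3 : ℝ) : p3 (fun a b c => f a b c * g a b c) x1 x2 x3 =
    p3 f x1 x2 x3 * g x1 x2 x3 + f x1 x2 x3 * p3 g x1 x2 x3 :=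
  ((hasDerivAt_p3 hf x1 x2 x3).mul (hasDerivAt_p3 hg x1 x2 x3)).deriv

end prodrule

section intomega
variable {b : ℝ}

lemma cont_inner {f : Fn3} (hf : Continuous fun p : ℝ × ℝ × ℝ => f p.1 p.2.1 p.2.2) :
    Continuous fun p : ℝ × ℝ => ∫ x3 in (-b)..(0:ℝ), f p.1 p.2 x3 := by
  apply intervalIntegral.continuous_parametric_intervalIntegral_of_continuous' (μ := volume)
  apply hf.comp (f := fun q : (ℝ × ℝ) × ℝ => (q.1.1, q.1.2, q.2))
  exact (continuous_fst.fst).prodMk ((continuous_fst.snd).prodMk continuous_snd)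

lemma cont_middle {f : Fn3} (hf : Continuous fun p : ℝ × ℝ × ℝ => f p.1 p.2.1 p.2.2) :
    Continuous fun x1 : ℝ => ∫ x2 in (0:ℝ)..1, ∫ x3 in (-b)..(0:ℝ), f x1 x2 x3 := by
  apply intervalIntegral.continuous_parametric_intervalIntegral_of_continuous' (μ := volume)
  exact cont_inner hf

lemma cont_slice3 {f : Fn3} (hf : Continuous fun p : ℝ × ℝ × ℝ => f p.1 p.2.1 p.2.2)
    (x1 x2 : ℝ) : Continuous fun x3 => f x1 x2 x3 := by
  apply hf.comp (f := fun t : ℝ => (x1, x2, t))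
  exact continuous_const.prodMk (continuous_const.prodMk continuous_id)

lemma intOmega_add {f g : Fn3} (hf : Continuous fun p : ℝ × ℝ × ℝ => f p.1 p.2.1 p.2.2)
    (hg : Continuous fun p : ℝ × ℝ × ℝ => g p.1 p.2.1 p.2.2) :
    intOmega b (fun a b' c => f a b' c + g a b' c) = intOmega b f + intOmega b g := by
  unfold intOmega
  have h3 : ∀ x1 x2 : ℝ, (∫ x3 in (-b)..(0:ℝ), (f x1 x2 x3 + g x1 x2 x3))
      = (∫ x3 in (-b)..(0:ℝ), f x1 x2 x3) + ∫ x3 in (-b)..(0:ℝ), g x1 x2 x3 := fun x1 x2 =>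
    intervalIntegral.integral_add ((cont_slice3 hf x1 x2).intervalIntegrable _ _)
      ((cont_slice3 hg x1 x2).intervalIntegrable _ _)
  simp only [h3]
  have h2 : ∀ x1 : ℝ, (∫ x2 in (0:ℝ)..1,
        ((∫ x3 in (-b)..(0:ℝ), f x1 x2 x3) + ∫ x3 in (-b)..(0:ℝ), g x1 x2 x3))
      = (∫ x2 in (0:ℝ)..1, ∫ x3 in (-b)..(0:ℝ), f x1 x2 x3)
        + ∫ x2 in (0:ℝ)..1, ∫ x3 in (-b)..(0:ℝ), g x1 x2 x3 := fun x1 =>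
    intervalIntegral.integral_add
      (((cont_inner hf).comp (Continuous.prodMk_right x1)).intervalIntegrable _ _)
      (((cont_inner hg).comp (Continuous.prodMk_right x1)).intervalIntegrable _ _)
  simp only [h2]
  exact intervalIntegral.integral_add ((cont_middle hf).intervalIntegrable _ _)
    ((cont_middle hg).intervalIntegrable _ _)

lemma intOmega_congr {f g : Fn3} (hb : 0 < b)
    (h : ∀ x1 x2 : ℝ, ∀ x3 ∈ Set.Ioo (-b) (0:ℝ), f x1 x2 x3 = g x1 x2 x3) :
    intOmega b f = intOmega b g := by
  unfold intOmega
  have h3 : ∀ x1 x2 : ℝ, (∫ x3 in (-b)..(0:ℝ), f x1 x2 x3)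
      = ∫ x3 in (-b)..(0:ℝ), g x1 x2 x3 := by
    intro x1 x2
    apply intervalIntegral.integral_congr_ae
    have h0 : ∀ᵐ x3 : ℝ ∂volume, x3 ∉ ({0} : Set ℝ) :=
      MeasureTheory.measure_eq_zero_iff_ae_notMem.mp Real.volume_singleton
    filter_upwards [h0] with x3 hx3 hmem
    rw [Set.uIoc_of_le (by linarith : -b ≤ (0:ℝ))] at hmem
    exact h x1 x2 x3 ⟨hmem.1, lt_of_le_of_ne hmem.2 (by simpa using hx3)⟩
  simp only [h3]

end intomega

section green3
variable {u v : Fn3} {b : ℝ}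

lemma jacobi_green3_13 (hb : 0 < b)
    (hu : ContDiff ℝ 1 (fun p : ℝ × ℝ × ℝ => u p.1 p.2.1 p.2.2))
    (hv : ContDiff ℝ 1 (fun p : ℝ × ℝ × ℝ => v p.1 p.2.1 p.2.2))
    (hpu : ∀ x1 x2 x3 : ℝ, u (x1 + 1) x2 x3 = u x1 x2 x3)
    (hpv : ∀ x1 x2 x3 : ℝ, v (x1 + 1) x2 x3 = v x1 x2 x3) :
    (∫ x1 in (0:ℝ)..1, ∫ x2 in (0:ℝ)..1, ∫ x3 in (-b)..(0:ℝ),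
        (p1 u x1 x2 x3 * p3 v x1 x2 x3 - p3 u x1 x2 x3 * p1 v x1 x2 x3))
      = (∫ x1 in (0:ℝ)..1, ∫ x2 in (0:ℝ)..1, u x1 x2 (-b) * p1 v x1 x2 (-b))
        - ∫ x1 in (0:ℝ)..1, ∫ x2 in (0:ℝ)..1, u x1 x2 0 * p1 v x1 x2 0 := by
  have hJc : Continuous fun p : ℝ × ℝ × ℝ =>
      p1 u p.1 p.2.1 p.2.2 * p3 v p.1 p.2.1 p.2.2 - p3 u p.1 p.2.1 p.2.2 * p1 v p.1 p.2.1 p.2.2 :=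
    ((cont_p1 hu).mul (cont_p3 hv)).sub ((cont_p3 hu).mul (cont_p1 hv))
  have hswap : (∫ x1 in (0:ℝ)..1, ∫ x2 in (0:ℝ)..1, ∫ x3 in (-b)..(0:ℝ),
        (p1 u x1 x2 x3 * p3 v x1 x2 x3 - p3 u x1 x2 x3 * p1 v x1 x2 x3))
      = ∫ x2 in (0:ℝ)..1, ∫ x1 in (0:ℝ)..1, ∫ x3 in (-b)..(0:ℝ),
        (p1 u x1 x2 x3 * p3 v x1 x2 x3 - p3 u x1 x2 x3 * p1 v x1 x2 x3) :=
    swap_integral2 (cont_inner (f := fun x1 x2 x3 => p1 u x1 x2 x3 * p3 v x1 x2 x3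
      - p3 u x1 x2 x3 * p1 v x1 x2 x3) hJc) (by norm_num) (by norm_num)
  rw [hswap]
  have hslice : ∀ x2 : ℝ, (∫ x1 in (0:ℝ)..1, ∫ x3 in (-b)..(0:ℝ),
        (p1 u x1 x2 x3 * p3 v x1 x2 x3 - p3 u x1 x2 x3 * p1 v x1 x2 x3))
      = (∫ x1 in (0:ℝ)..1, u x1 x2 (-b) * p1 v x1 x2 (-b))
        - ∫ x1 in (0:ℝ)..1, u x1 x2 0 * p1 v x1 x2 0 := by
    intro x2
    exact jacobi_green (u := fun x y => u x x2 y) (v := fun x y => v x x2 y) hb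
      (contDiff_slice13 hu x2) (contDiff_slice13 hv x2)
      (fun x y => hpu x x2 y) (fun x y => hpv x x2 y)
  simp only [hslice]
  have hc1 : Continuous fun p : ℝ × ℝ => u p.2 p.1 (-b) * p1 v p.2 p.1 (-b) := by
    have h1 : Continuous fun p : ℝ × ℝ × ℝ => u p.1 p.2.1 p.2.2 := hu.continuous
    exact ((h1.comp ((continuous_snd).prodMk ((continuous_fst).prodMk continuous_const))).mul
      ((cont_p1 hv).comp ((continuous_snd).prodMk ((continuous_fst).prodMk continuous_const))))
  have hc2 : Continuous fun p : ℝ × ℝ => u p.2 p.1 0 * p1 v p.2 p.1 0 := by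
    have h1 : Continuous fun p : ℝ × ℝ × ℝ => u p.1 p.2.1 p.2.2 := hu.continuous
    exact ((h1.comp ((continuous_snd).prodMk ((continuous_fst).prodMk continuous_const))).mul
      ((cont_p1 hv).comp ((continuous_snd).prodMk ((continuous_fst).prodMk continuous_const))))
  have hsub : (∫ x2 in (0:ℝ)..1, ((∫ x1 in (0:ℝ)..1, u x1 x2 (-b) * p1 v x1 x2 (-b))
        - ∫ x1 in (0:ℝ)..1, u x1 x2 0 * p1 v x1 x2 0))
      = (∫ x2 in (0:ℝ)..1, ∫ x1 in (0:ℝ)..1, u x1 x2 (-b) * p1 v x1 x2 (-b))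
        - ∫ x2 in (0:ℝ)..1, ∫ x1 in (0:ℝ)..1, u x1 x2 0 * p1 v x1 x2 0 := by
    apply intervalIntegral.integral_sub
    · exact (intervalIntegral.continuous_parametric_intervalIntegral_of_continuous'
        (f := fun x2 x1 => u x1 x2 (-b) * p1 v x1 x2 (-b)) (by exact hc1) _ _).intervalIntegrable _ _
    · exact (intervalIntegral.continuous_parametric_intervalIntegral_of_continuous'
        (f := fun x2 x1 => u x1 x2 0 * p1 v x1 x2 0) (by exact hc2) _ _).intervalIntegrable _ _
  rw [hsub]
  congr 1
  · exact swap_integral2 (f := fun x2 x1 => u x1 x2 (-b) * p1 v x1 x2 (-b)) hc1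
      (by norm_num) (by norm_num)
  · exact swap_integral2 (f := fun x2 x1 => u x1 x2 0 * p1 v x1 x2 0) hc2
      (by norm_num) (by norm_num)

lemma jacobi_green3_23 (hb : 0 < b)
    (hu : ContDiff ℝ 1 (fun p : ℝ × ℝ × ℝ => u p.1 p.2.1 p.2.2))
    (hv : ContDiff ℝ 1 (fun p : ℝ × ℝ × ℝ => v p.1 p.2.1 p.2.2))
    (hpu : ∀ x1 x2 x3 : ℝ, u x1 (x2 + 1) x3 = u x1 x2 x3)
    (hpv : ∀ x1 x2 x3 : ℝ, v x1 (x2 + 1) x3 = v x1 x2 x3) :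
    (∫ x1 in (0:ℝ)..1, ∫ x2 in (0:ℝ)..1, ∫ x3 in (-b)..(0:ℝ),
        (p2 u x1 x2 x3 * p3 v x1 x2 x3 - p3 u x1 x2 x3 * p2 v x1 x2 x3))
      = (∫ x1 in (0:ℝ)..1, ∫ x2 in (0:ℝ)..1, u x1 x2 (-b) * p2 v x1 x2 (-b))
        - ∫ x1 in (0:ℝ)..1, ∫ x2 in (0:ℝ)..1, u x1 x2 0 * p2 v x1 x2 0 := by
  have hslice : ∀ x1 : ℝ, (∫ x2 in (0:ℝ)..1, ∫ x3 in (-b)..(0:ℝ),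
        (p2 u x1 x2 x3 * p3 v x1 x2 x3 - p3 u x1 x2 x3 * p2 v x1 x2 x3))
      = (∫ x2 in (0:ℝ)..1, u x1 x2 (-b) * p2 v x1 x2 (-b))
        - ∫ x2 in (0:ℝ)..1, u x1 x2 0 * p2 v x1 x2 0 := by
    intro x1
    exact jacobi_green (u := fun x y => u x1 x y) (v := fun x y => v x1 x y) hb
      (contDiff_slice23 hu x1) (contDiff_slice23 hv x1)
      (fun x y => hpu x1 x y) (fun x y => hpv x1 x y)
  simp only [hslice]
  have hc1 : Continuous fun p : ℝ × ℝ => u p.1 p.2 (-b) * p2 v p.1 p.2 (-b) := by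
    have h1 : Continuous fun p : ℝ × ℝ × ℝ => u p.1 p.2.1 p.2.2 := hu.continuous
    exact ((h1.comp ((continuous_fst).prodMk ((continuous_snd).prodMk continuous_const))).mul
      ((cont_p2 hv).comp ((continuous_fst).prodMk ((continuous_snd).prodMk continuous_const))))
  have hc2 : Continuous fun p : ℝ × ℝ => u p.1 p.2 0 * p2 v p.1 p.2 0 := by
    have h1 : Continuous fun p : ℝ × ℝ × ℝ => u p.1 p.2.1 p.2.2 := hu.continuous
    exact ((h1.comp ((continuous_fst).prodMk ((continuous_snd).prodMk continuous_const))).mul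
      ((cont_p2 hv).comp ((continuous_fst).prodMk ((continuous_snd).prodMk continuous_const))))
  apply intervalIntegral.integral_sub
  · exact (intervalIntegral.continuous_parametric_intervalIntegral_of_continuous'
      (f := fun x1 x2 => u x1 x2 (-b) * p2 v x1 x2 (-b)) (by exact hc1) _ _).intervalIntegrable _ _
  · exact (intervalIntegral.continuous_parametric_intervalIntegral_of_continuous'
      (f := fun x1 x2 => u x1 x2 0 * p2 v x1 x2 0) (by exact hc2) _ _).intervalIntegrable _ _

lemma ftc3 (hb : 0 < b)
    (hu : ContDiff ℝ 1 (fun p : ℝ × ℝ × ℝ => u p.1 p.2.1 p.2.2)) :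
    (∫ x1 in (0:ℝ)..1, ∫ x2 in (0:ℝ)..1, ∫ x3 in (-b)..(0:ℝ), p3 u x1 x2 x3)
      = ∫ x1 in (0:ℝ)..1, ∫ x2 in (0:ℝ)..1, (u x1 x2 0 - u x1 x2 (-b)) := by
  have hslice : ∀ x1 x2 : ℝ, (∫ x3 in (-b)..(0:ℝ), p3 u x1 x2 x3) = u x1 x2 0 - u x1 x2 (-b) := by
    intro x1 x2
    apply intervalIntegral.integral_eq_sub_of_hasDerivAt
    · exact fun x3 _ => hasDerivAt_p3 hu x1 x2 x3
    · exact (cont_slice3 (cont_p3 hu) x1 x2).intervalIntegrable _ _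
  simp only [hslice]

end green3

lemma fd0_apply (φ f : Fn3) (x1 x2 x3 : ℝ) : fd φ 0 f x1 x2 x3 =
    p1 f x1 x2 x3 - p1 φ x1 x2 x3 / p3 φ x1 x2 x3 * p3 f x1 x2 x3 := rfl

lemma fd1_apply (φ f : Fn3) (x1 x2 x3 : ℝ) : fd φ 1 f x1 x2 x3 =
    p2 f x1 x2 x3 - p2 φ x1 x2 x3 / p3 φ x1 x2 x3 * p3 f x1 x2 x3 := rfl

lemma fd2_apply (φ f : Fn3) (x1 x2 x3 : ℝ) : fd φ 2 f x1 x2 x3 =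
    p3 f x1 x2 x3 / p3 φ x1 x2 x3 := rfl

lemma cont_b0 {f : Fn3} (hf : Continuous fun p : ℝ × ℝ × ℝ => f p.1 p.2.1 p.2.2) (c : ℝ) :
    Continuous fun p : ℝ × ℝ => f p.1 p.2 c :=
  hf.comp (continuous_fst.prodMk (continuous_snd.prodMk continuous_const))

lemma double_add {A B : ℝ → ℝ → ℝ} (hA : Continuous fun p : ℝ × ℝ => A p.1 p.2)
    (hB : Continuous fun p : ℝ × ℝ => B p.1 p.2) :
    (∫ x1 in (0:ℝ)..1, ∫ x2 in (0:ℝ)..1, (A x1 x2 + B x1 x2))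
      = (∫ x1 in (0:ℝ)..1, ∫ x2 in (0:ℝ)..1, A x1 x2)
        + ∫ x1 in (0:ℝ)..1, ∫ x2 in (0:ℝ)..1, B x1 x2 := by
  have h1 : ∀ x1 : ℝ, (∫ x2 in (0:ℝ)..1, (A x1 x2 + B x1 x2))
      = (∫ x2 in (0:ℝ)..1, A x1 x2) + ∫ x2 in (0:ℝ)..1, B x1 x2 := fun x1 =>
    intervalIntegral.integral_add ((hA.comp (Continuous.prodMk_right x1)).intervalIntegrable _ _)
      ((hB.comp (Continuous.prodMk_right x1)).intervalIntegrable _ _)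
  simp only [h1]
  exact intervalIntegral.integral_add
    ((intervalIntegral.continuous_parametric_intervalIntegral_of_continuous'
      (f := fun x1 x2 => A x1 x2) (by exact hA) _ _).intervalIntegrable _ _)
    ((intervalIntegral.continuous_parametric_intervalIntegral_of_continuous'
      (f := fun x1 x2 => B x1 x2) (by exact hB) _ _).intervalIntegrable _ _)


/-- **Antisymmetry of the directional derivative along a tangential divergence-free field.**
If `∇^φ·F = 0` in `Ω`, `F·N = 0` on the top boundary, and `F₃ = 0` on the bottom, then
`∫_Ω ((F·∇^φ)g) h ∂₃φ = −∫_Ω g ((F·∇^φ)h) ∂₃φ`. -/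
theorem directional_derivative_antisymmetry (b : ℝ) (hb : 0 < b) (φ : Fn3)
    (hφ : ContDiff ℝ 1 (fun p : ℝ × ℝ × ℝ => φ p.1 p.2.1 p.2.2))
    (hperφ : Periodic3 φ)
    (hφ3 : ∀ (x1 x2 : ℝ), ∀ x3 ∈ Set.Icc (-b) 0, 0 < p3 φ x1 x2 x3)
    (hφbot : ∃ δ > 0, ∀ (x1 x2 : ℝ), ∀ x3 ∈ Set.Icc (-b) (-b + δ), φ x1 x2 x3 = x3)
    (F : Fin 3 → Fn3) (g h : Fn3)
    (hF : ∀ i : Fin 3, ContDiff ℝ 1 (fun p : ℝ × ℝ × ℝ => F i p.1 p.2.1 p.2.2))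
    (hg : ContDiff ℝ 1 (fun p : ℝ × ℝ × ℝ => g p.1 p.2.1 p.2.2))
    (hh : ContDiff ℝ 1 (fun p : ℝ × ℝ × ℝ => h p.1 p.2.1 p.2.2))
    (hperF : ∀ i, Periodic3 (F i)) (hperg : Periodic3 g) (hperh : Periodic3 h)
    (hdivF : ∀ (x1 x2 : ℝ), ∀ x3 ∈ Set.Ioo (-b) 0,
      ∑ i : Fin 3, fd φ i (F i) x1 x2 x3 = 0)
    (hFN : ∀ x1 x2 : ℝ,
      F 0 x1 x2 0 * (-(p1 φ x1 x2 0)) + F 1 x1 x2 0 * (-(p2 φ x1 x2 0)) + F 2 x1 x2 0 = 0)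
    (hFbot : ∀ x1 x2 : ℝ, F 2 x1 x2 (-b) = 0) :
    intOmega b (fun x1 x2 x3 => dirD φ F g x1 x2 x3 * h x1 x2 x3 * p3 φ x1 x2 x3)
      = -intOmega b (fun x1 x2 x3 => g x1 x2 x3 * dirD φ F h x1 x2 x3 * p3 φ x1 x2 x3) := by
  obtain ⟨δ, hδ0, hδbot⟩ := hφbot
  -- the bottom boundary facts
  have hp1bot : ∀ x1 x2 : ℝ, p1 φ x1 x2 (-b) = 0 := by
    intro x1 x2
    have hc : (fun t => φ t x2 (-b)) = fun _ => (-b : ℝ) := by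
      funext t; exact hδbot t x2 (-b) ⟨le_rfl, by linarith⟩
    show deriv (fun t => φ t x2 (-b)) x1 = 0
    rw [hc]; exact deriv_const _ _
  have hp2bot : ∀ x1 x2 : ℝ, p2 φ x1 x2 (-b) = 0 := by
    intro x1 x2
    have hc : (fun t => φ x1 t (-b)) = fun _ => (-b : ℝ) := by
      funext t; exact hδbot x1 t (-b) ⟨le_rfl, by linarith⟩
    show deriv (fun t => φ x1 t (-b)) x2 = 0
    rw [hc]; exact deriv_const _ _
  have hp3ne : ∀ (x1 x2 x3 : ℝ), x3 ∈ Set.Ioo (-b) (0:ℝ) → p3 φ x1 x2 x3 ≠ 0 :=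
    fun x1 x2 x3 hx => ne_of_gt (hφ3 x1 x2 x3 ⟨le_of_lt hx.1, le_of_lt hx.2⟩)
  -- continuity bits
  have hcg := hg.continuous
  have hch := hh.continuous
  have hcF : ∀ i, Continuous fun p : ℝ × ℝ × ℝ => F i p.1 p.2.1 p.2.2 := fun i => (hF i).continuous
  have hc1g := cont_p1 hg; have hc2g := cont_p2 hg; have hc3g := cont_p3 hg
  have hc1h := cont_p1 hh; have hc2h := cont_p2 hh; have hc3h := cont_p3 hh
  have hc1φ := cont_p1 hφ; have hc2φ := cont_p2 hφ; have hc3φ := cont_p3 hφ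
  -- ContDiff of the products u_i = g·h·F_i
  have hu0 : ContDiff ℝ 1 (fun p : ℝ × ℝ × ℝ =>
      (fun a b' c => g a b' c * h a b' c * F 0 a b' c) p.1 p.2.1 p.2.2) := (hg.mul hh).mul (hF 0)
  have hu1 : ContDiff ℝ 1 (fun p : ℝ × ℝ × ℝ =>
      (fun a b' c => g a b' c * h a b' c * F 1 a b' c) p.1 p.2.1 p.2.2) := (hg.mul hh).mul (hF 1)
  have hu2 : ContDiff ℝ 1 (fun p : ℝ × ℝ × ℝ =>
      (fun a b' c => g a b' c * h a b' c * F 2 a b' c) p.1 p.2.1 p.2.2) := (hg.mul hh).mul (hF 2)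
  -- replace the singular integrands by regular ones
  have e1 : intOmega b (fun x1 x2 x3 => dirD φ F g x1 x2 x3 * h x1 x2 x3 * p3 φ x1 x2 x3)
      = intOmega b (fun x1 x2 x3 =>
          (F 0 x1 x2 x3 * (p1 g x1 x2 x3 * p3 φ x1 x2 x3 - p1 φ x1 x2 x3 * p3 g x1 x2 x3)
           + F 1 x1 x2 x3 * (p2 g x1 x2 x3 * p3 φ x1 x2 x3 - p2 φ x1 x2 x3 * p3 g x1 x2 x3)
           + F 2 x1 x2 x3 * p3 g x1 x2 x3) * h x1 x2 x3) := by
    apply intOmega_congr hb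
    intro x1 x2 x3 hx3
    have hne := hp3ne x1 x2 x3 hx3
    simp only [dirD, Fin.sum_univ_three, fd0_apply, fd1_apply, fd2_apply]
    field_simp
  have e2 : intOmega b (fun x1 x2 x3 => g x1 x2 x3 * dirD φ F h x1 x2 x3 * p3 φ x1 x2 x3)
      = intOmega b (fun x1 x2 x3 => g x1 x2 x3 *
          (F 0 x1 x2 x3 * (p1 h x1 x2 x3 * p3 φ x1 x2 x3 - p1 φ x1 x2 x3 * p3 h x1 x2 x3)
           + F 1 x1 x2 x3 * (p2 h x1 x2 x3 * p3 φ x1 x2 x3 - p2 φ x1 x2 x3 * p3 h x1 x2 x3)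
           + F 2 x1 x2 x3 * p3 h x1 x2 x3)) := by
    apply intOmega_congr hb
    intro x1 x2 x3 hx3
    have hne := hp3ne x1 x2 x3 hx3
    simp only [dirD, Fin.sum_univ_three, fd0_apply, fd1_apply, fd2_apply]
    field_simp
  rw [e1, e2]
  -- continuity of the two regular integrands
  have hV1c : Continuous fun p : ℝ × ℝ × ℝ =>
      (F 0 p.1 p.2.1 p.2.2 * (p1 g p.1 p.2.1 p.2.2 * p3 φ p.1 p.2.1 p.2.2
          - p1 φ p.1 p.2.1 p.2.2 * p3 g p.1 p.2.1 p.2.2)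
       + F 1 p.1 p.2.1 p.2.2 * (p2 g p.1 p.2.1 p.2.2 * p3 φ p.1 p.2.1 p.2.2
          - p2 φ p.1 p.2.1 p.2.2 * p3 g p.1 p.2.1 p.2.2)
       + F 2 p.1 p.2.1 p.2.2 * p3 g p.1 p.2.1 p.2.2) * h p.1 p.2.1 p.2.2 :=
    ((((hcF 0).mul ((hc1g.mul hc3φ).sub (hc1φ.mul hc3g))).add
      (((hcF 1).mul ((hc2g.mul hc3φ).sub (hc2φ.mul hc3g))))).add
      ((hcF 2).mul hc3g)).mul hch
  have hV2c : Continuous fun p : ℝ × ℝ × ℝ =>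
      g p.1 p.2.1 p.2.2 *
      (F 0 p.1 p.2.1 p.2.2 * (p1 h p.1 p.2.1 p.2.2 * p3 φ p.1 p.2.1 p.2.2
          - p1 φ p.1 p.2.1 p.2.2 * p3 h p.1 p.2.1 p.2.2)
       + F 1 p.1 p.2.1 p.2.2 * (p2 h p.1 p.2.1 p.2.2 * p3 φ p.1 p.2.1 p.2.2
          - p2 φ p.1 p.2.1 p.2.2 * p3 h p.1 p.2.1 p.2.2)
       + F 2 p.1 p.2.1 p.2.2 * p3 h p.1 p.2.1 p.2.2) :=
    hcg.mul ((((hcF 0).mul ((hc1h.mul hc3φ).sub (hc1φ.mul hc3h))).add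
      (((hcF 1).mul ((hc2h.mul hc3φ).sub (hc2φ.mul hc3h))))).add
      ((hcF 2).mul hc3h))
  -- it suffices to show the sum vanishes
  rw [eq_neg_iff_add_eq_zero, ← intOmega_add hV1c hV2c]
  -- rewrite the sum as a total divergence
  have e3 : intOmega b (fun x1 x2 x3 =>
      (F 0 x1 x2 x3 * (p1 g x1 x2 x3 * p3 φ x1 x2 x3 - p1 φ x1 x2 x3 * p3 g x1 x2 x3)
       + F 1 x1 x2 x3 * (p2 g x1 x2 x3 * p3 φ x1 x2 x3 - p2 φ x1 x2 x3 * p3 g x1 x2 x3)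
       + F 2 x1 x2 x3 * p3 g x1 x2 x3) * h x1 x2 x3
      + g x1 x2 x3 *
      (F 0 x1 x2 x3 * (p1 h x1 x2 x3 * p3 φ x1 x2 x3 - p1 φ x1 x2 x3 * p3 h x1 x2 x3)
       + F 1 x1 x2 x3 * (p2 h x1 x2 x3 * p3 φ x1 x2 x3 - p2 φ x1 x2 x3 * p3 h x1 x2 x3)
       + F 2 x1 x2 x3 * p3 h x1 x2 x3))
      = intOmega b (fun x1 x2 x3 =>
        (p1 (fun a b' c => g a b' c * h a b' c * F 0 a b' c) x1 x2 x3 * p3 φ x1 x2 x3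
          - p3 (fun a b' c => g a b' c * h a b' c * F 0 a b' c) x1 x2 x3 * p1 φ x1 x2 x3)
        + ((p2 (fun a b' c => g a b' c * h a b' c * F 1 a b' c) x1 x2 x3 * p3 φ x1 x2 x3
          - p3 (fun a b' c => g a b' c * h a b' c * F 1 a b' c) x1 x2 x3 * p2 φ x1 x2 x3)
          + p3 (fun a b' c => g a b' c * h a b' c * F 2 a b' c) x1 x2 x3)) := by
    apply intOmega_congr hb
    intro x1 x2 x3 hx3
    have hne := hp3ne x1 x2 x3 hx3
    have h10 : p1 (fun a b' c => g a b' c * h a b' c * F 0 a b' c) x1 x2 x3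
        = (p1 g x1 x2 x3 * h x1 x2 x3 + g x1 x2 x3 * p1 h x1 x2 x3) * F 0 x1 x2 x3
          + g x1 x2 x3 * h x1 x2 x3 * p1 (F 0) x1 x2 x3 :=
      (((hasDerivAt_p1 hg x1 x2 x3).mul (hasDerivAt_p1 hh x1 x2 x3)).mul
        (hasDerivAt_p1 (hF 0) x1 x2 x3)).deriv
    have h30 : p3 (fun a b' c => g a b' c * h a b' c * F 0 a b' c) x1 x2 x3
        = (p3 g x1 x2 x3 * h x1 x2 x3 + g x1 x2 x3 * p3 h x1 x2 x3) * F 0 x1 x2 x3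
          + g x1 x2 x3 * h x1 x2 x3 * p3 (F 0) x1 x2 x3 :=
      (((hasDerivAt_p3 hg x1 x2 x3).mul (hasDerivAt_p3 hh x1 x2 x3)).mul
        (hasDerivAt_p3 (hF 0) x1 x2 x3)).deriv
    have h21 : p2 (fun a b' c => g a b' c * h a b' c * F 1 a b' c) x1 x2 x3
        = (p2 g x1 x2 x3 * h x1 x2 x3 + g x1 x2 x3 * p2 h x1 x2 x3) * F 1 x1 x2 x3
          + g x1 x2 x3 * h x1 x2 x3 * p2 (F 1) x1 x2 x3 :=
      (((hasDerivAt_p2 hg x1 x2 x3).mul (hasDerivAt_p2 hh x1 x2 x3)).mul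
        (hasDerivAt_p2 (hF 1) x1 x2 x3)).deriv
    have h31 : p3 (fun a b' c => g a b' c * h a b' c * F 1 a b' c) x1 x2 x3
        = (p3 g x1 x2 x3 * h x1 x2 x3 + g x1 x2 x3 * p3 h x1 x2 x3) * F 1 x1 x2 x3
          + g x1 x2 x3 * h x1 x2 x3 * p3 (F 1) x1 x2 x3 :=
      (((hasDerivAt_p3 hg x1 x2 x3).mul (hasDerivAt_p3 hh x1 x2 x3)).mul
        (hasDerivAt_p3 (hF 1) x1 x2 x3)).deriv
    have h32 : p3 (fun a b' c => g a b' c * h a b' c * F 2 a b' c) x1 x2 x3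
        = (p3 g x1 x2 x3 * h x1 x2 x3 + g x1 x2 x3 * p3 h x1 x2 x3) * F 2 x1 x2 x3
          + g x1 x2 x3 * h x1 x2 x3 * p3 (F 2) x1 x2 x3 :=
      (((hasDerivAt_p3 hg x1 x2 x3).mul (hasDerivAt_p3 hh x1 x2 x3)).mul
        (hasDerivAt_p3 (hF 2) x1 x2 x3)).deriv
    have hd := hdivF x1 x2 x3 hx3
    rw [Fin.sum_univ_three, fd0_apply, fd1_apply, fd2_apply] at hd
    rw [h10, h30, h21, h31, h32]
    have hbrack : p1 (F 0) x1 x2 x3 * p3 φ x1 x2 x3 - p1 φ x1 x2 x3 * p3 (F 0) x1 x2 x3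
        + (p2 (F 1) x1 x2 x3 * p3 φ x1 x2 x3 - p2 φ x1 x2 x3 * p3 (F 1) x1 x2 x3)
        + p3 (F 2) x1 x2 x3
        = (p1 (F 0) x1 x2 x3 - p1 φ x1 x2 x3 / p3 φ x1 x2 x3 * p3 (F 0) x1 x2 x3
          + (p2 (F 1) x1 x2 x3 - p2 φ x1 x2 x3 / p3 φ x1 x2 x3 * p3 (F 1) x1 x2 x3)
          + p3 (F 2) x1 x2 x3 / p3 φ x1 x2 x3) * p3 φ x1 x2 x3 := by
      field_simp
    rw [hd, zero_mul] at hbrack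
    linear_combination (-(g x1 x2 x3 * h x1 x2 x3)) * hbrack
  rw [e3]
  -- continuity of the divergence pieces
  have hJ1c : Continuous fun p : ℝ × ℝ × ℝ =>
      p1 (fun a b' c => g a b' c * h a b' c * F 0 a b' c) p.1 p.2.1 p.2.2 * p3 φ p.1 p.2.1 p.2.2
      - p3 (fun a b' c => g a b' c * h a b' c * F 0 a b' c) p.1 p.2.1 p.2.2
        * p1 φ p.1 p.2.1 p.2.2 :=
    ((cont_p1 hu0).mul hc3φ).sub ((cont_p3 hu0).mul hc1φ)
  have hJ2c : Continuous fun p : ℝ × ℝ × ℝ =>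
      p2 (fun a b' c => g a b' c * h a b' c * F 1 a b' c) p.1 p.2.1 p.2.2 * p3 φ p.1 p.2.1 p.2.2
      - p3 (fun a b' c => g a b' c * h a b' c * F 1 a b' c) p.1 p.2.1 p.2.2
        * p2 φ p.1 p.2.1 p.2.2 :=
    ((cont_p2 hu1).mul hc3φ).sub ((cont_p3 hu1).mul hc2φ)
  have hK3c : Continuous fun p : ℝ × ℝ × ℝ =>
      p3 (fun a b' c => g a b' c * h a b' c * F 2 a b' c) p.1 p.2.1 p.2.2 := cont_p3 hu2
  rw [intOmega_add hJ1c (hJ2c.add hK3c), intOmega_add hJ2c hK3c]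
  -- evaluate each piece via the Green identities
  have hI1 : intOmega b (fun x1 x2 x3 =>
      p1 (fun a b' c => g a b' c * h a b' c * F 0 a b' c) x1 x2 x3 * p3 φ x1 x2 x3
      - p3 (fun a b' c => g a b' c * h a b' c * F 0 a b' c) x1 x2 x3 * p1 φ x1 x2 x3)
      = (∫ x1 in (0:ℝ)..1, ∫ x2 in (0:ℝ)..1,
          g x1 x2 (-b) * h x1 x2 (-b) * F 0 x1 x2 (-b) * p1 φ x1 x2 (-b))
        - ∫ x1 in (0:ℝ)..1, ∫ x2 in (0:ℝ)..1,
          g x1 x2 0 * h x1 x2 0 * F 0 x1 x2 0 * p1 φ x1 x2 0 :=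
    jacobi_green3_13 hb hu0 hφ
      (fun x1 x2 x3 => by rw [hperg.1, hperh.1, (hperF 0).1]) hperφ.1
  have hI2 : intOmega b (fun x1 x2 x3 =>
      p2 (fun a b' c => g a b' c * h a b' c * F 1 a b' c) x1 x2 x3 * p3 φ x1 x2 x3
      - p3 (fun a b' c => g a b' c * h a b' c * F 1 a b' c) x1 x2 x3 * p2 φ x1 x2 x3)
      = (∫ x1 in (0:ℝ)..1, ∫ x2 in (0:ℝ)..1,
          g x1 x2 (-b) * h x1 x2 (-b) * F 1 x1 x2 (-b) * p2 φ x1 x2 (-b))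
        - ∫ x1 in (0:ℝ)..1, ∫ x2 in (0:ℝ)..1,
          g x1 x2 0 * h x1 x2 0 * F 1 x1 x2 0 * p2 φ x1 x2 0 :=
    jacobi_green3_23 hb hu1 hφ
      (fun x1 x2 x3 => by rw [hperg.2, hperh.2, (hperF 1).2]) hperφ.2
  have hI3 : intOmega b (fun x1 x2 x3 =>
      p3 (fun a b' c => g a b' c * h a b' c * F 2 a b' c) x1 x2 x3)
      = ∫ x1 in (0:ℝ)..1, ∫ x2 in (0:ℝ)..1,
          (g x1 x2 0 * h x1 x2 0 * F 2 x1 x2 0 - g x1 x2 (-b) * h x1 x2 (-b) * F 2 x1 x2 (-b)) :=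
    ftc3 hb hu2
  simp only [hp1bot, mul_zero, intervalIntegral.integral_zero, zero_sub] at hI1
  simp only [hp2bot, mul_zero, intervalIntegral.integral_zero, zero_sub] at hI2
  simp only [hFbot, mul_zero, sub_zero] at hI3
  rw [hI1, hI2, hI3]
  -- the top boundary terms cancel by the boundary condition F·N = 0
  have hpt : ∀ x1 x2 : ℝ, g x1 x2 0 * h x1 x2 0 * F 2 x1 x2 0
      = g x1 x2 0 * h x1 x2 0 * F 0 x1 x2 0 * p1 φ x1 x2 0
        + g x1 x2 0 * h x1 x2 0 * F 1 x1 x2 0 * p2 φ x1 x2 0 := by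
    intro x1 x2
    linear_combination (g x1 x2 0 * h x1 x2 0) * hFN x1 x2
  have hCsplit : (∫ x1 in (0:ℝ)..1, ∫ x2 in (0:ℝ)..1, g x1 x2 0 * h x1 x2 0 * F 2 x1 x2 0)
      = (∫ x1 in (0:ℝ)..1, ∫ x2 in (0:ℝ)..1,
          g x1 x2 0 * h x1 x2 0 * F 0 x1 x2 0 * p1 φ x1 x2 0)
        + ∫ x1 in (0:ℝ)..1, ∫ x2 in (0:ℝ)..1,
          g x1 x2 0 * h x1 x2 0 * F 1 x1 x2 0 * p2 φ x1 x2 0 := by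
    simp only [hpt]
    exact double_add
      ((((cont_b0 hcg 0).mul (cont_b0 hch 0)).mul (cont_b0 (hcF 0) 0)).mul (cont_b0 hc1φ 0))
      ((((cont_b0 hcg 0).mul (cont_b0 hch 0)).mul (cont_b0 (hcF 1) 0)).mul (cont_b0 hc2φ 0))
  rw [hCsplit]
  ring
end
end

section
/- (Commutativity of flattened spatial derivatives.) Let φ : ℝ³ → ℝ be C² with ∂₃φ(x) ≠ 0 everywhere and let f : ℝ³ → ℝ be C². Then for all i, j ∈ {1,2,3} and all x: ∂ᵢ^φ(∂ⱼ^φ f)(x) = ∂ⱼ^φ(∂ᵢ^φ f)(x). In particular, if a C² vector field v satisfies ∇^φ·v = 0 on an open set, then ∂ᵢ^φ∂₃^φ vᵢ = ∂₃^φ(∇^φ·v) = 0 there (summation over i). -/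
noncomputable section

namespace FlatAux

/-- The uncurried version of a function of three real variables. -/
def unc (f : Fn3) : ℝ × ℝ × ℝ → ℝ := fun p => f p.1 p.2.1 p.2.2

def e3 : Fin 3 → ℝ × ℝ × ℝ := ![(1,0,0),(0,1,0),(0,0,1)]

def upd : Fin 3 → (ℝ × ℝ × ℝ) → ℝ → ℝ × ℝ × ℝ :=
  ![fun X y => (y, X.2.1, X.2.2), fun X y => (X.1, y, X.2.2), fun X y => (X.1, X.2.1, y)]

def co : Fin 3 → (ℝ × ℝ × ℝ) → ℝ := ![fun X => X.1, fun X => X.2.1, fun X => X.2.2]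

lemma upd_co (i : Fin 3) (X : ℝ × ℝ × ℝ) : upd i X (co i X) = X := by fin_cases i <;> rfl

lemma line_hasDerivAt (i : Fin 3) (X : ℝ × ℝ × ℝ) (t : ℝ) :
    HasDerivAt (fun y => upd i X y) (e3 i) t := by
  fin_cases i
  · exact (hasDerivAt_id t).prodMk ((hasDerivAt_const t _).prodMk (hasDerivAt_const t _))
  · exact (hasDerivAt_const t _).prodMk ((hasDerivAt_id t).prodMk (hasDerivAt_const t _))
  · exact (hasDerivAt_const t _).prodMk ((hasDerivAt_const t _).prodMk (hasDerivAt_id t))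

def D1 (F : ℝ × ℝ × ℝ → ℝ) (X : ℝ × ℝ × ℝ) (i : Fin 3) : ℝ := fderiv ℝ F X (e3 i)

def D2 (F : ℝ × ℝ × ℝ → ℝ) (X : ℝ × ℝ × ℝ) (i j : Fin 3) : ℝ :=
  fderiv ℝ (fderiv ℝ F) X (e3 i) (e3 j)

variable {F Φ : ℝ × ℝ × ℝ → ℝ}

lemma hF_line (hF : ContDiff ℝ 2 F) (i : Fin 3) (X : ℝ × ℝ × ℝ) (t : ℝ) :
    HasDerivAt (fun y => F (upd i X y)) (D1 F (upd i X t) i) t :=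
  ((hF.differentiable two_ne_zero (upd i X t)).hasFDerivAt).comp_hasDerivAt t
    (line_hasDerivAt i X t)

lemma hD1_line (hF : ContDiff ℝ 2 F) (i j : Fin 3) (X : ℝ × ℝ × ℝ) (t : ℝ) :
    HasDerivAt (fun y => D1 F (upd i X y) j) (D2 F (upd i X t) i j) t := by
  have h1 : DifferentiableAt ℝ (fderiv ℝ F) (upd i X t) :=
    ((hF.fderiv_right (m := 1) le_rfl).differentiable one_ne_zero) _
  have h2 : HasFDerivAt (fun x => fderiv ℝ F x (e3 j))
      ((ContinuousLinearMap.apply ℝ ℝ (e3 j)).comp (fderiv ℝ (fderiv ℝ F) (upd i X t)))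
      (upd i X t) :=
    (ContinuousLinearMap.apply ℝ ℝ (e3 j)).hasFDerivAt.comp _ h1.hasFDerivAt
  have h3 := h2.comp_hasDerivAt t (line_hasDerivAt i X t)
  simpa [D1, D2, Function.comp_def] using h3

lemma D2_symm (hF : ContDiff ℝ 2 F) (X : ℝ × ℝ × ℝ) (i j : Fin 3) :
    D2 F X i j = D2 F X j i :=
  (hF.contDiffAt.isSymmSndFDerivAt (by simp)) (e3 i) (e3 j)

def pp : Fin 3 → Fn3 → Fn3 := ![p1, p2, p3]

lemma pp_deriv (k : Fin 3) (h : Fn3) (x1 x2 x3 : ℝ) :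
    pp k h x1 x2 x3 =
      deriv (fun y => h (upd k (x1,x2,x3) y).1 (upd k (x1,x2,x3) y).2.1
        (upd k (x1,x2,x3) y).2.2) (co k (x1,x2,x3)) := by
  fin_cases k <;> rfl

lemma pp_eq_D1 (f : Fn3) (hF : ContDiff ℝ 2 (unc f)) (k : Fin 3) (X : ℝ × ℝ × ℝ) :
    pp k f X.1 X.2.1 X.2.2 = D1 (unc f) X k := by
  have h := hF_line hF k X (co k X)
  rw [upd_co] at h
  have := h.deriv
  fin_cases k <;> exact this

lemma p1_eq (f : Fn3) (hF : ContDiff ℝ 2 (unc f)) (x1 x2 x3 : ℝ) :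
    p1 f x1 x2 x3 = D1 (unc f) (x1,x2,x3) 0 := pp_eq_D1 f hF 0 (x1,x2,x3)

lemma p2_eq (f : Fn3) (hF : ContDiff ℝ 2 (unc f)) (x1 x2 x3 : ℝ) :
    p2 f x1 x2 x3 = D1 (unc f) (x1,x2,x3) 1 := pp_eq_D1 f hF 1 (x1,x2,x3)

lemma p3_eq (f : Fn3) (hF : ContDiff ℝ 2 (unc f)) (x1 x2 x3 : ℝ) :
    p3 f x1 x2 x3 = D1 (unc f) (x1,x2,x3) 2 := pp_eq_D1 f hF 2 (x1,x2,x3)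

def gA (Φ F : ℝ × ℝ × ℝ → ℝ) (j : Fin 3) (u : ℝ × ℝ × ℝ) : ℝ :=
  D1 F u j - D1 Φ u j / D1 Φ u 2 * D1 F u 2

def gB (Φ F : ℝ × ℝ × ℝ → ℝ) (u : ℝ × ℝ × ℝ) : ℝ := D1 F u 2 / D1 Φ u 2

def vA (Φ F : ℝ × ℝ × ℝ → ℝ) (k j : Fin 3) (u : ℝ × ℝ × ℝ) : ℝ :=
  D2 F u k j - ((D2 Φ u k j * D1 Φ u 2 - D1 Φ u j * D2 Φ u k 2) / D1 Φ u 2 ^ 2 * D1 F u 2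
    + D1 Φ u j / D1 Φ u 2 * D2 F u k 2)

def vB (Φ F : ℝ × ℝ × ℝ → ℝ) (k : Fin 3) (u : ℝ × ℝ × ℝ) : ℝ :=
  (D2 F u k 2 * D1 Φ u 2 - D1 F u 2 * D2 Φ u k 2) / D1 Φ u 2 ^ 2

lemma hgA (hΦ : ContDiff ℝ 2 Φ) (hF : ContDiff ℝ 2 F) (hne : ∀ u, D1 Φ u 2 ≠ 0)
    (k j : Fin 3) (X : ℝ × ℝ × ℝ) (t : ℝ) :
    HasDerivAt (fun y => gA Φ F j (upd k X y)) (vA Φ F k j (upd k X t)) t :=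
  (hD1_line hF k j X t).sub
    (((hD1_line hΦ k j X t).div (hD1_line hΦ k 2 X t) (hne _)).mul (hD1_line hF k 2 X t))

lemma hgB (hΦ : ContDiff ℝ 2 Φ) (hF : ContDiff ℝ 2 F) (hne : ∀ u, D1 Φ u 2 ≠ 0)
    (k : Fin 3) (X : ℝ × ℝ × ℝ) (t : ℝ) :
    HasDerivAt (fun y => gB Φ F (upd k X y)) (vB Φ F k (upd k X t)) t :=
  (hD1_line hF k 2 X t).div (hD1_line hΦ k 2 X t) (hne _)

lemma fd_eq0 (φ f : Fn3) (hφ : ContDiff ℝ 2 (unc φ)) (hf : ContDiff ℝ 2 (unc f))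
    (y1 y2 y3 : ℝ) : fd φ 0 f y1 y2 y3 = gA (unc φ) (unc f) 0 (y1,y2,y3) := by
  show p1 f y1 y2 y3 - p1 φ y1 y2 y3 / p3 φ y1 y2 y3 * p3 f y1 y2 y3 = _
  rw [p1_eq f hf, p1_eq φ hφ, p3_eq f hf, p3_eq φ hφ]; rfl

lemma fd_eq1 (φ f : Fn3) (hφ : ContDiff ℝ 2 (unc φ)) (hf : ContDiff ℝ 2 (unc f))
    (y1 y2 y3 : ℝ) : fd φ 1 f y1 y2 y3 = gA (unc φ) (unc f) 1 (y1,y2,y3) := by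
  show p2 f y1 y2 y3 - p2 φ y1 y2 y3 / p3 φ y1 y2 y3 * p3 f y1 y2 y3 = _
  rw [p2_eq f hf, p2_eq φ hφ, p3_eq f hf, p3_eq φ hφ]; rfl

lemma fd_eq2 (φ f : Fn3) (hφ : ContDiff ℝ 2 (unc φ)) (hf : ContDiff ℝ 2 (unc f))
    (y1 y2 y3 : ℝ) : fd φ 2 f y1 y2 y3 = gB (unc φ) (unc f) (y1,y2,y3) := by
  show p3 f y1 y2 y3 / p3 φ y1 y2 y3 = _
  rw [p3_eq f hf, p3_eq φ hφ]; rfl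

lemma pp_fdA (φ f : Fn3) (hφ : ContDiff ℝ 2 (unc φ)) (hf : ContDiff ℝ 2 (unc f))
    (hne : ∀ u, D1 (unc φ) u 2 ≠ 0) (k j : Fin 3) (hj : j = 0 ∨ j = 1) (x1 x2 x3 : ℝ) :
    pp k (fd φ j f) x1 x2 x3 = vA (unc φ) (unc f) k j (x1,x2,x3) := by
  have h := hgA hφ hf hne k j (x1,x2,x3) (co k (x1,x2,x3))
  rw [upd_co] at h
  have hfun : (fun y => fd φ j f (upd k (x1,x2,x3) y).1 (upd k (x1,x2,x3) y).2.1
      (upd k (x1,x2,x3) y).2.2) = fun y => gA (unc φ) (unc f) j (upd k (x1,x2,x3) y) := by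
    funext y
    rcases hj with h' | h' <;> subst h'
    · exact fd_eq0 φ f hφ hf _ _ _
    · exact fd_eq1 φ f hφ hf _ _ _
  rw [pp_deriv k (fd φ j f) x1 x2 x3, hfun]
  exact h.deriv

lemma pp_fdB (φ f : Fn3) (hφ : ContDiff ℝ 2 (unc φ)) (hf : ContDiff ℝ 2 (unc f))
    (hne : ∀ u, D1 (unc φ) u 2 ≠ 0) (k : Fin 3) (x1 x2 x3 : ℝ) :
    pp k (fd φ 2 f) x1 x2 x3 = vB (unc φ) (unc f) k (x1,x2,x3) := by
  have h := hgB hφ hf hne k (x1,x2,x3) (co k (x1,x2,x3))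
  rw [upd_co] at h
  have hfun : (fun y => fd φ 2 f (upd k (x1,x2,x3) y).1 (upd k (x1,x2,x3) y).2.1
      (upd k (x1,x2,x3) y).2.2) = fun y => gB (unc φ) (unc f) (upd k (x1,x2,x3) y) := by
    funext y; exact fd_eq2 φ f hφ hf _ _ _
  rw [pp_deriv k (fd φ 2 f) x1 x2 x3, hfun]
  exact h.deriv

end FlatAux

open FlatAux

/-- **Commutativity of flattened spatial derivatives.**
For `C²` functions `φ` (with `∂₃φ ≠ 0` everywhere) and `f`, the flattened derivatives
commute: `∂ᵢ^φ∂ⱼ^φ f = ∂ⱼ^φ∂ᵢ^φ f`. In particular, if a `C²` vector field `v` has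
`∇^φ·v = 0` on an open set `U`, then `Σᵢ ∂ᵢ^φ∂₃^φ vᵢ = ∂₃^φ(∇^φ·v) = 0` on `U`. -/
theorem flattened_derivatives_commute (φ : Fn3)
    (hφ : ContDiff ℝ 2 (fun p : ℝ × ℝ × ℝ => φ p.1 p.2.1 p.2.2))
    (hφ3 : ∀ x1 x2 x3 : ℝ, p3 φ x1 x2 x3 ≠ 0) :
    (∀ f : Fn3, ContDiff ℝ 2 (fun p : ℝ × ℝ × ℝ => f p.1 p.2.1 p.2.2) →
      ∀ i j : Fin 3, ∀ x1 x2 x3 : ℝ,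
        fd φ i (fd φ j f) x1 x2 x3 = fd φ j (fd φ i f) x1 x2 x3) ∧
    ∀ (U : Set (ℝ × ℝ × ℝ)), IsOpen U → ∀ v : Fin 3 → Fn3,
      (∀ i : Fin 3, ContDiff ℝ 2 (fun p : ℝ × ℝ × ℝ => v i p.1 p.2.1 p.2.2)) →
      (∀ x1 x2 x3 : ℝ, (x1, x2, x3) ∈ U →
        ∑ i : Fin 3, fd φ i (v i) x1 x2 x3 = 0) →
      ∀ x1 x2 x3 : ℝ, (x1, x2, x3) ∈ U →
        (∑ i : Fin 3, fd φ i (fd φ 2 (v i)) x1 x2 x3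
            = fd φ 2 (fun y1 y2 y3 => ∑ i : Fin 3, fd φ i (v i) y1 y2 y3) x1 x2 x3) ∧
        ∑ i : Fin 3, fd φ i (fd φ 2 (v i)) x1 x2 x3 = 0 := by
  have hΦ : ContDiff ℝ 2 (unc φ) := hφ
  have hne : ∀ u, D1 (unc φ) u 2 ≠ 0 := by
    intro u
    have h := hφ3 u.1 u.2.1 u.2.2
    rwa [p3_eq φ hΦ] at h
  have part1 : ∀ f : Fn3, ContDiff ℝ 2 (fun p : ℝ × ℝ × ℝ => f p.1 p.2.1 p.2.2) →
      ∀ i j : Fin 3, ∀ x1 x2 x3 : ℝ,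
        fd φ i (fd φ j f) x1 x2 x3 = fd φ j (fd φ i f) x1 x2 x3 := by
    intro f hf i j x1 x2 x3
    have hF : ContDiff ℝ 2 (unc f) := hf
    have sF := D2_symm hF (x1,x2,x3)
    have sΦ := D2_symm hΦ (x1,x2,x3)
    have kA := pp_fdA φ f hΦ hF hne
    have kB := pp_fdB φ f hΦ hF hne
    have hb := hne (x1,x2,x3)
    have e0 : ∀ g : Fn3, fd φ 0 g x1 x2 x3 = pp 0 g x1 x2 x3 -
        D1 (unc φ) (x1,x2,x3) 0 / D1 (unc φ) (x1,x2,x3) 2 * pp 2 g x1 x2 x3 := by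
      intro g
      show p1 g x1 x2 x3 - p1 φ x1 x2 x3 / p3 φ x1 x2 x3 * p3 g x1 x2 x3 = _
      rw [p1_eq φ hΦ, p3_eq φ hΦ]; rfl
    have e1 : ∀ g : Fn3, fd φ 1 g x1 x2 x3 = pp 1 g x1 x2 x3 -
        D1 (unc φ) (x1,x2,x3) 1 / D1 (unc φ) (x1,x2,x3) 2 * pp 2 g x1 x2 x3 := by
      intro g
      show p2 g x1 x2 x3 - p2 φ x1 x2 x3 / p3 φ x1 x2 x3 * p3 g x1 x2 x3 = _
      rw [p2_eq φ hΦ, p3_eq φ hΦ]; rfl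
    have e2 : ∀ g : Fn3, fd φ 2 g x1 x2 x3 = pp 2 g x1 x2 x3 /
        D1 (unc φ) (x1,x2,x3) 2 := by
      intro g
      show p3 g x1 x2 x3 / p3 φ x1 x2 x3 = _
      rw [p3_eq φ hΦ]; rfl
    fin_cases i <;> fin_cases j
    · rfl
    · -- (0,1)
      show fd φ 0 (fd φ 1 f) x1 x2 x3 = fd φ 1 (fd φ 0 f) x1 x2 x3
      rw [e0, e1, kA 0 1 (Or.inr rfl) x1 x2 x3, kA 2 1 (Or.inr rfl) x1 x2 x3,
        kA 1 0 (Or.inl rfl) x1 x2 x3, kA 2 0 (Or.inl rfl) x1 x2 x3]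
      simp only [vA, vB, sF 1 0, sF 2 0, sF 2 1, sΦ 1 0, sΦ 2 0, sΦ 2 1]
      field_simp
      ring
    · -- (0,2)
      show fd φ 0 (fd φ 2 f) x1 x2 x3 = fd φ 2 (fd φ 0 f) x1 x2 x3
      rw [e0, e2, kB 0 x1 x2 x3, kB 2 x1 x2 x3, kA 2 0 (Or.inl rfl) x1 x2 x3]
      simp only [vA, vB, sF 1 0, sF 2 0, sF 2 1, sΦ 1 0, sΦ 2 0, sΦ 2 1]
      field_simp
      ring
    · -- (1,0)
      show fd φ 1 (fd φ 0 f) x1 x2 x3 = fd φ 0 (fd φ 1 f) x1 x2 x3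
      rw [e0, e1, kA 0 1 (Or.inr rfl) x1 x2 x3, kA 2 1 (Or.inr rfl) x1 x2 x3,
        kA 1 0 (Or.inl rfl) x1 x2 x3, kA 2 0 (Or.inl rfl) x1 x2 x3]
      simp only [vA, vB, sF 1 0, sF 2 0, sF 2 1, sΦ 1 0, sΦ 2 0, sΦ 2 1]
      field_simp
      ring
    · rfl
    · -- (1,2)
      show fd φ 1 (fd φ 2 f) x1 x2 x3 = fd φ 2 (fd φ 1 f) x1 x2 x3
      rw [e1, e2, kB 1 x1 x2 x3, kB 2 x1 x2 x3, kA 2 1 (Or.inr rfl) x1 x2 x3]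
      simp only [vA, vB, sF 1 0, sF 2 0, sF 2 1, sΦ 1 0, sΦ 2 0, sΦ 2 1]
      field_simp
      ring
    · -- (2,0)
      show fd φ 2 (fd φ 0 f) x1 x2 x3 = fd φ 0 (fd φ 2 f) x1 x2 x3
      rw [e0, e2, kB 0 x1 x2 x3, kB 2 x1 x2 x3, kA 2 0 (Or.inl rfl) x1 x2 x3]
      simp only [vA, vB, sF 1 0, sF 2 0, sF 2 1, sΦ 1 0, sΦ 2 0, sΦ 2 1]
      field_simp
      ring
    · -- (2,1)
      show fd φ 2 (fd φ 1 f) x1 x2 x3 = fd φ 1 (fd φ 2 f) x1 x2 x3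
      rw [e1, e2, kB 1 x1 x2 x3, kB 2 x1 x2 x3, kA 2 1 (Or.inr rfl) x1 x2 x3]
      simp only [vA, vB, sF 1 0, sF 2 0, sF 2 1, sΦ 1 0, sΦ 2 0, sΦ 2 1]
      field_simp
      ring
    · rfl
  refine ⟨part1, ?_⟩
  intro U hU v hv hdiv x1 x2 x3 hx
  -- derivatives of the summands along the third coordinate
  have H0 : HasDerivAt (fun y => fd φ 0 (v 0) x1 x2 y)
      (vA (unc φ) (unc (v 0)) 2 0 (x1,x2,x3)) x3 := by
    have h := hgA hΦ (hv 0) hne 2 0 (x1,x2,x3) (co 2 (x1,x2,x3))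
    rw [upd_co] at h
    have hfun : (fun y => fd φ 0 (v 0) x1 x2 y)
        = fun y => gA (unc φ) (unc (v 0)) 0 (upd 2 (x1,x2,x3) y) :=
      funext fun y => fd_eq0 φ (v 0) hΦ (hv 0) x1 x2 y
    rw [hfun]; exact h
  have H1 : HasDerivAt (fun y => fd φ 1 (v 1) x1 x2 y)
      (vA (unc φ) (unc (v 1)) 2 1 (x1,x2,x3)) x3 := by
    have h := hgA hΦ (hv 1) hne 2 1 (x1,x2,x3) (co 2 (x1,x2,x3))
    rw [upd_co] at h
    have hfun : (fun y => fd φ 1 (v 1) x1 x2 y)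
        = fun y => gA (unc φ) (unc (v 1)) 1 (upd 2 (x1,x2,x3) y) :=
      funext fun y => fd_eq1 φ (v 1) hΦ (hv 1) x1 x2 y
    rw [hfun]; exact h
  have H2 : HasDerivAt (fun y => fd φ 2 (v 2) x1 x2 y)
      (vB (unc φ) (unc (v 2)) 2 (x1,x2,x3)) x3 := by
    have h := hgB hΦ (hv 2) hne 2 (x1,x2,x3) (co 2 (x1,x2,x3))
    rw [upd_co] at h
    have hfun : (fun y => fd φ 2 (v 2) x1 x2 y)
        = fun y => gB (unc φ) (unc (v 2)) (upd 2 (x1,x2,x3) y) :=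
      funext fun y => fd_eq2 φ (v 2) hΦ (hv 2) x1 x2 y
    rw [hfun]; exact h
  have Hsum : HasDerivAt (fun y => ∑ i : Fin 3, fd φ i (v i) x1 x2 y)
      (vA (unc φ) (unc (v 0)) 2 0 (x1,x2,x3) + vA (unc φ) (unc (v 1)) 2 1 (x1,x2,x3)
        + vB (unc φ) (unc (v 2)) 2 (x1,x2,x3)) x3 := by
    have h := (H0.add H1).add H2
    simpa only [Fin.sum_univ_three, Pi.add_def] using h
  have hp3div : p3 (fun y1 y2 y3 => ∑ i : Fin 3, fd φ i (v i) y1 y2 y3) x1 x2 x3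
      = vA (unc φ) (unc (v 0)) 2 0 (x1,x2,x3) + vA (unc φ) (unc (v 1)) 2 1 (x1,x2,x3)
        + vB (unc φ) (unc (v 2)) 2 (x1,x2,x3) := Hsum.deriv
  have hp0 : p3 (fd φ 0 (v 0)) x1 x2 x3 = vA (unc φ) (unc (v 0)) 2 0 (x1,x2,x3) := H0.deriv
  have hp1 : p3 (fd φ 1 (v 1)) x1 x2 x3 = vA (unc φ) (unc (v 1)) 2 1 (x1,x2,x3) := H1.deriv
  have hp2 : p3 (fd φ 2 (v 2)) x1 x2 x3 = vB (unc φ) (unc (v 2)) 2 (x1,x2,x3) := H2.deriv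
  have hc : ∑ i : Fin 3, fd φ i (fd φ 2 (v i)) x1 x2 x3
      = fd φ 2 (fun y1 y2 y3 => ∑ i : Fin 3, fd φ i (v i) y1 y2 y3) x1 x2 x3 := by
    rw [Fin.sum_univ_three]
    rw [part1 (v 0) (hv 0) 0 2 x1 x2 x3, part1 (v 1) (hv 1) 1 2 x1 x2 x3,
      part1 (v 2) (hv 2) 2 2 x1 x2 x3]
    show p3 (fd φ 0 (v 0)) x1 x2 x3 / p3 φ x1 x2 x3
        + p3 (fd φ 1 (v 1)) x1 x2 x3 / p3 φ x1 x2 x3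
        + p3 (fd φ 2 (v 2)) x1 x2 x3 / p3 φ x1 x2 x3
      = p3 (fun y1 y2 y3 => ∑ i : Fin 3, fd φ i (v i) y1 y2 y3) x1 x2 x3 / p3 φ x1 x2 x3
    rw [hp3div, hp0, hp1, hp2]
    ring
  have hzero : p3 (fun y1 y2 y3 => ∑ i : Fin 3, fd φ i (v i) y1 y2 y3) x1 x2 x3 = 0 := by
    have hopen : IsOpen {y : ℝ | (x1, x2, y) ∈ U} :=
      hU.preimage (continuous_const.prodMk (continuous_const.prodMk continuous_id))
    have hev : (fun y => ∑ i : Fin 3, fd φ i (v i) x1 x2 y) =ᶠ[nhds x3]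
        fun _ => (0 : ℝ) :=
      Filter.eventuallyEq_of_mem (hopen.mem_nhds hx) (fun y hy => hdiv x1 x2 y hy)
    show deriv (fun y => ∑ i : Fin 3, fd φ i (v i) x1 x2 y) x3 = 0
    rw [hev.deriv_eq]
    exact deriv_const _ _
  have hdz : fd φ 2 (fun y1 y2 y3 => ∑ i : Fin 3, fd φ i (v i) y1 y2 y3) x1 x2 x3 = 0 := by
    show p3 (fun y1 y2 y3 => ∑ i : Fin 3, fd φ i (v i) y1 y2 y3) x1 x2 x3
        / p3 φ x1 x2 x3 = 0
    rw [hzero, zero_div]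
  exact ⟨hc, by rw [hc, hdz]⟩
end
end
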